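/- arXiv:2411.10975 — 6 statements merged into one kernel-verified Lean document; each statement's English description precedes it below -/
import Mathlib

section
/- For any real s < 0, the estimate ‖∫₀¹ e^{i(1-t')∂ₓₓ}(|e^{it'∂ₓₓ}u₀|² e^{it'∂ₓₓ}u₀) dt'‖_{H^s} ≲ ‖u₀‖_{H^s}³ fails; more precisely, taking û₀ = χ_{[N,N+c]} for large N and small fixed c > 0, the left side is ≳ N^s while the right side is ∼ N^{3s}, so no uniform constant exists as N → ∞. -/
open MeasureTheory Complex Set
open scoped ENNReal

noncomputable section

/-- Japanese bracket `⟨x⟩ = (1+x²)^{1/2}`. -/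
def jap (x : ℝ) : ℝ := Real.sqrt (1 + x ^ 2)

/-- Fourier-side second Picard iterate (at time 1) of the cubic Schrödinger
nonlinearity, applied to data with Fourier transform `f`, evaluated at frequency `ξ`. -/
def cubicIter (f : ℝ → ℂ) (ξ : ℝ) : ℂ :=
  ∫ t' in (0:ℝ)..1, ∫ ξ₁ : ℝ, ∫ ξ₂ : ℝ,
    Complex.exp (Complex.I * ((2 * t' * (ξ₁ - ξ₂) * (ξ - ξ₁) : ℝ) : ℂ)) *
      f ξ₁ * (starRingEnd ℂ) (f ξ₂) * f (ξ - ξ₁ + ξ₂)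

/-!
Take `û₀ = χ_[N, N+1/2]` and `ξ ∈ [N, N+1/2]`. All frequencies `ξ₁, ξ₂, ξ - ξ₁ + ξ₂` that contribute
to the iterate lie in `[N, N+1/2]`, so the phase `2t(ξ₁ - ξ₂)(ξ - ξ₁)` is at most `1/2` in
modulus and nothing cancels: the real part of the integrand is at least `7/8` on a rectangle of
area `1/16`, whence `|cubicIter| ≥ 7/128` on the whole box. As `⟨ξ⟩ ≍ ⟨N⟩` there, the estimate
would give `⟨N⟩^s ≲ C ⟨N⟩^{3s}`, i.e. `1 ≲ C ⟨N⟩^{2s}`, which fails as `N → ∞` since `s < 0`.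
-/

namespace CubicIterate

def cubicIntegrand (f : ℝ → ℂ) (ξ t : ℝ) (p : ℝ × ℝ) : ℂ :=
  Complex.exp (Complex.I * ((2 * t * (p.1 - p.2) * (ξ - p.1) : ℝ) : ℂ)) *
    f p.1 * (starRingEnd ℂ) (f p.2) * f (ξ - p.1 + p.2)

variable {f : ℝ → ℂ} {S : Set ℝ}

theorem measurable_cubicIntegrand (hf : Measurable f) (ξ : ℝ) :
    Measurable fun q : ℝ × ℝ × ℝ => cubicIntegrand f ξ q.1 q.2 := by
  unfold cubicIntegrand
  fun_prop

theorem norm_cubicIntegrand_le (hf : ∀ x, ‖f x‖ ≤ S.indicator 1 x) (ξ t : ℝ) (p : ℝ × ℝ) :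
    ‖cubicIntegrand f ξ t p‖ ≤ (S ×ˢ S).indicator 1 p := by
  have hS0 (x : ℝ) : 0 ≤ S.indicator (1 : ℝ → ℝ) x := indicator_nonneg (fun _ _ => zero_le_one) x
  have hf1 (x : ℝ) : ‖f x‖ ≤ 1 := (hf x).trans (indicator_le_self' (fun _ _ => zero_le_one) x)
  rw [← p.eta, indicator_prod_one]
  simp only [cubicIntegrand, norm_mul, mul_comm I, norm_exp_ofReal_mul_I, RCLike.norm_conj, one_mul]
  calc ‖f p.1‖ * ‖f p.2‖ * ‖f (ξ - p.1 + p.2)‖ ≤ S.indicator 1 p.1 * S.indicator 1 p.2 * 1 :=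
        mul_le_mul (mul_le_mul (hf _) (hf _) (norm_nonneg _) (hS0 _)) (hf1 _) (norm_nonneg _)
          (mul_nonneg (hS0 _) (hS0 _))
    _ = _ := mul_one _

theorem integrable_indicator_prod_self (hSm : MeasurableSet S) (hS : volume S < ∞) :
    Integrable ((S ×ˢ S).indicator (1 : ℝ × ℝ → ℝ)) := by
  refine (integrable_indicator_iff (hSm.prod hSm)).2 (integrableOn_const ?_)
  rw [Measure.volume_eq_prod, Measure.prod_prod]
  exact ENNReal.mul_ne_top hS.ne hS.ne

theorem integrable_cubicIntegrand (hfm : Measurable f) (hf : ∀ x, ‖f x‖ ≤ S.indicator 1 x)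
    (hSm : MeasurableSet S) (hS : volume S < ∞) (ξ t : ℝ) :
    Integrable (cubicIntegrand f ξ t) := by
  refine (integrable_indicator_prod_self hSm hS).mono' ?_
    (.of_forall (norm_cubicIntegrand_le hf ξ t))
  exact ((measurable_cubicIntegrand hfm ξ).comp measurable_prodMk_left).aestronglyMeasurable

theorem cubicIter_eq_integral_prod (hfm : Measurable f) (hf : ∀ x, ‖f x‖ ≤ S.indicator 1 x)
    (hSm : MeasurableSet S) (hS : volume S < ∞) (ξ : ℝ) :
    cubicIter f ξ = ∫ t in (0:ℝ)..1, ∫ p, cubicIntegrand f ξ t p := by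
  refine intervalIntegral.integral_congr fun t _ => ?_
  rw [Measure.volume_eq_prod, integral_prod _ (integrable_cubicIntegrand hfm hf hSm hS ξ t)]
  rfl

theorem norm_integral_cubicIntegrand_le (hf : ∀ x, ‖f x‖ ≤ S.indicator 1 x)
    (hSm : MeasurableSet S) (hS : volume S < ∞) (ξ t : ℝ) :
    ‖∫ p, cubicIntegrand f ξ t p‖ ≤ volume.real (S ×ˢ S) := by
  calc ‖∫ p, cubicIntegrand f ξ t p‖ ≤ ∫ p, (S ×ˢ S).indicator (1 : ℝ × ℝ → ℝ) p :=
        norm_integral_le_of_norm_le (integrable_indicator_prod_self hSm hS)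
          (.of_forall (norm_cubicIntegrand_le hf ξ t))
    _ = volume.real (S ×ˢ S) := by simp [integral_indicator (hSm.prod hSm)]

theorem intervalIntegrable_integral_cubicIntegrand (hfm : Measurable f)
    (hf : ∀ x, ‖f x‖ ≤ S.indicator 1 x) (hSm : MeasurableSet S) (hS : volume S < ∞) (ξ a b : ℝ) :
    IntervalIntegrable (fun t => ∫ p, cubicIntegrand f ξ t p) volume a b := by
  have hmeas :=
    (measurable_cubicIntegrand hfm ξ).stronglyMeasurable.integral_prod_right' (ν := volume)
  exact (IntegrableOn.of_bound measure_Icc_lt_top hmeas.aestronglyMeasurable _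
    (.of_forall (norm_integral_cubicIntegrand_le hf hSm hS ξ))).intervalIntegrable

theorem seven_eighths_le_cos {θ : ℝ} (h : |θ| ≤ 1/2) : 7/8 ≤ Real.cos θ := by
  have : θ ^ 2 ≤ (1/2) ^ 2 := sq_le_sq' (abs_le.1 h).1 (abs_le.1 h).2
  linarith [Real.one_sub_sq_div_two_le_cos (x := θ)]

def box (N : ℝ) : Set ℝ := Icc N (N + 1/2)

def bump (N : ℝ) : ℝ → ℂ := (box N).indicator 1

theorem measurableSet_box (N : ℝ) : MeasurableSet (box N) := measurableSet_Icc

theorem volume_box (N : ℝ) : volume (box N) = ENNReal.ofReal (1/2) := by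
  simp [box, Real.volume_Icc]

theorem volume_box_lt_top (N : ℝ) : volume (box N) < ∞ := by
  simp [volume_box]

theorem measurable_bump (N : ℝ) : Measurable (bump N) :=
  measurable_const.indicator (measurableSet_box N)

theorem norm_bump (N x : ℝ) : ‖bump N x‖ = (box N).indicator 1 x := by
  simp [bump, norm_indicator_eq_indicator_norm, Pi.one_def]

def inputsInBox (N ξ : ℝ) : Set (ℝ × ℝ) :=
  {p | p.1 ∈ box N ∧ p.2 ∈ box N ∧ ξ - p.1 + p.2 ∈ box N}

theorem abs_sub_le_one_of_mem_box {N ξ : ℝ} (hξ : ξ ∈ box N) : |ξ - N| ≤ 1 :=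
  abs_sub_le_iff.2 ⟨by linarith [hξ.1, hξ.2], by linarith [hξ.1, hξ.2]⟩

theorem re_cubicIntegrand_bump_ge {N ξ t : ℝ} (hξ : ξ ∈ box N) (ht : t ∈ Icc (0:ℝ) 1)
    (p : ℝ × ℝ) :
    (inputsInBox N ξ).indicator (fun _ => 7/8) p ≤ (cubicIntegrand (bump N) ξ t p).re := by
  classical
  rw [indicator_apply]
  split_ifs with hp
  · obtain ⟨h₁, h₂, h₃⟩ := hp
    have hval : cubicIntegrand (bump N) ξ t p =
        exp (((2 * t * (p.1 - p.2) * (ξ - p.1) : ℝ) : ℂ) * I) := by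
      simp [cubicIntegrand, bump, h₁, h₂, h₃, mul_comm I]
    rw [hval, exp_ofReal_mul_I_re]
    simp only [box, mem_Icc] at hξ h₁ h₂ h₃
    refine seven_eighths_le_cos ?_
    calc |2 * t * (p.1 - p.2) * (ξ - p.1)| = 2 * |t| * |p.1 - p.2| * |ξ - p.1| := by
          simp only [abs_mul, abs_two]
      _ ≤ 2 * 1 * (1/2) * (1/2) := by
          gcongr
          exacts [abs_le.2 ⟨by linarith [ht.1], ht.2⟩, abs_le.2 ⟨by linarith, by linarith⟩,
            abs_le.2 ⟨by linarith, by linarith⟩]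
      _ = 1/2 := by norm_num
  · have : cubicIntegrand (bump N) ξ t p = 0 := by
      simp only [inputsInBox, mem_ofPred_eq, not_and_or] at hp
      rcases hp with h | h | h <;> simp [cubicIntegrand, bump, h]
    simp [this]

theorem re_integral_cubicIntegrand_bump_ge {N ξ t : ℝ} (hξ : ξ ∈ box N)
    (ht : t ∈ Icc (0:ℝ) 1) :
    7/128 ≤ (∫ p, cubicIntegrand (bump N) ξ t p).re := by
  set c := (ξ - N) / 2 with hc
  set R := Icc (N + c) (N + c + 1/4) ×ˢ Icc (N + 1/4 - c) (N + 1/2 - c)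
  have hRm : MeasurableSet R := measurableSet_Icc.prod measurableSet_Icc
  have hR : R ⊆ inputsInBox N ξ := by
    rintro ⟨x, y⟩ ⟨⟨hx₁, hx₂⟩, hy₁, hy₂⟩
    simp only [box, mem_Icc] at hξ ⊢
    refine ⟨⟨?_, ?_⟩, ⟨?_, ?_⟩, ?_, ?_⟩ <;> linarith
  have hint := integrable_cubicIntegrand (measurable_bump N) (fun x => (norm_bump N x).le)
    (measurableSet_box N) (volume_box_lt_top N) ξ t
  calc (7/128 : ℝ) = ∫ p, R.indicator (fun _ => (7/8 : ℝ)) p := by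
        rw [integral_indicator_const _ hRm, Measure.volume_eq_prod, measureReal_prod_prod]
        simp only [Real.volume_real_Icc, smul_eq_mul]
        norm_num
    _ ≤ ∫ p, (cubicIntegrand (bump N) ξ t p).re :=
        integral_mono ((integrable_indicator_iff hRm).2 (integrableOn_const ?_)) hint.re fun p =>
          (indicator_le_indicator_of_subset hR (fun _ => by norm_num) p).trans
            (re_cubicIntegrand_bump_ge hξ ht p)
    _ = (∫ p, cubicIntegrand (bump N) ξ t p).re := integral_re hint
  rw [Measure.volume_eq_prod, Measure.prod_prod]
  exact ENNReal.mul_ne_top measure_Icc_lt_top.ne measure_Icc_lt_top.ne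

theorem re_cubicIter_bump_ge {N ξ : ℝ} (hξ : ξ ∈ box N) :
    7/128 ≤ (cubicIter (bump N) ξ).re := by
  have hF := intervalIntegrable_integral_cubicIntegrand (measurable_bump N)
    (fun x => (norm_bump N x).le) (measurableSet_box N) (volume_box_lt_top N) ξ 0 1
  rw [cubicIter_eq_integral_prod (measurable_bump N) (fun x => (norm_bump N x).le)
    (measurableSet_box N) (volume_box_lt_top N), ← RCLike.re_to_complex,
    ← intervalIntegral.intervalIntegral_re hF]
  calc (7/128 : ℝ) = ∫ _ in (0:ℝ)..1, (7/128 : ℝ) := by simp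
    _ ≤ _ := intervalIntegral.integral_mono_on zero_le_one intervalIntegrable_const
        ⟨hF.1.re, hF.2.re⟩ fun _ ht => re_integral_cubicIntegrand_bump_ge hξ ht

theorem le_norm_cubicIter_bump {N ξ : ℝ} (hξ : ξ ∈ box N) :
    7/128 ≤ ‖cubicIter (bump N) ξ‖ :=
  (re_cubicIter_bump_ge hξ).trans (re_le_norm _)

theorem jap_pos (x : ℝ) : 0 < jap x :=
  Real.sqrt_pos.2 (by positivity)

theorem jap_rpow_pos (x s : ℝ) : 0 < jap x ^ s :=
  Real.rpow_pos_of_pos (jap_pos x) s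

theorem le_jap (x : ℝ) : x ≤ jap x :=
  Real.le_sqrt_of_sq_le (by linarith)

theorem jap_le_two_mul_jap {x y : ℝ} (h : |x - y| ≤ 1) : jap x ≤ 2 * jap y := by
  obtain ⟨h₁, h₂⟩ := abs_le.1 h
  rw [jap, jap, Real.sqrt_le_iff]
  refine ⟨by positivity, ?_⟩
  rw [mul_pow, Real.sq_sqrt (by positivity)]
  nlinarith [mul_nonneg (sub_nonneg.2 h₂) (neg_le_iff_add_nonneg.1 h₁), sq_nonneg (x - 2 * y)]

theorem jap_rpow_le {s x y : ℝ} (hs : s ≤ 0) (h : |x - y| ≤ 1) :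
    jap x ^ s ≤ 2 ^ (-s) * jap y ^ s := by
  have hy : jap y ≤ 2 * jap x := jap_le_two_mul_jap (by rwa [abs_sub_comm])
  calc jap x ^ s = 2 ^ (-s) * (2 * jap x) ^ s := by
        rw [Real.mul_rpow zero_le_two (jap_pos x).le, ← mul_assoc, ← Real.rpow_add two_pos,
          neg_add_cancel, Real.rpow_zero, one_mul]
    _ ≤ 2 ^ (-s) * jap y ^ s :=
        mul_le_mul_of_nonneg_left (Real.rpow_le_rpow_of_nonpos (jap_pos y) hy hs) (by positivity)

theorem tendsto_jap_rpow_atTop {s : ℝ} (hs : s < 0) :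
    Filter.Tendsto (fun x => jap x ^ s) Filter.atTop (nhds 0) := by
  have hjap : Filter.Tendsto jap Filter.atTop Filter.atTop :=
    Filter.tendsto_atTop_mono le_jap Filter.tendsto_id
  simpa [Function.comp_def] using (tendsto_rpow_neg_atTop (y := -s) (by linarith)).comp hjap

theorem enorm_mul_measure_rpow_le_eLpNorm {α E : Type*} [MeasurableSpace α] [NormedAddCommGroup E]
    {μ : Measure α} {p : ℝ≥0∞} (hp0 : p ≠ 0) (hp : p ≠ ∞) {s : Set α} (hs : MeasurableSet s)
    {f : α → E} {c : ℝ} (hc : 0 ≤ c) (hf : ∀ x ∈ s, c ≤ ‖f x‖) :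
    ‖c‖ₑ * μ s ^ (1 / p.toReal) ≤ eLpNorm f p μ := by
  rw [← eLpNorm_indicator_const hs hp0 hp]
  refine eLpNorm_mono fun x => ?_
  by_cases hx : x ∈ s
  · simpa [hx, abs_of_nonneg hc] using hf x hx
  · simp [hx]

theorem eLpNorm_weighted_bump_le {s : ℝ} (hs : s ≤ 0) (N : ℝ) :
    eLpNorm (fun ξ => jap ξ ^ s * ‖bump N ξ‖) 2 volume ≤
      ‖2 ^ (-s) * jap N ^ s‖ₑ * volume (box N) ^ (1 / (2 : ℝ≥0∞).toReal) := by
  refine (eLpNorm_mono_real fun ξ => ?_).trans (eLpNorm_indicator_const_le _ _)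
  rw [norm_bump]
  by_cases hξ : ξ ∈ box N
  · simpa [hξ, abs_of_nonneg (jap_rpow_pos ξ s).le] using
      jap_rpow_le hs (abs_sub_le_one_of_mem_box hξ)
  · simp [hξ]

theorem le_eLpNorm_weighted_cubicIter_bump {s : ℝ} (hs : s ≤ 0) (N : ℝ) :
    ‖7/128 * (jap N ^ s / 2 ^ (-s))‖ₑ * volume (box N) ^ (1 / (2 : ℝ≥0∞).toReal) ≤
      eLpNorm (fun ξ => jap ξ ^ s * ‖cubicIter (bump N) ξ‖) 2 volume := by
  refine enorm_mul_measure_rpow_le_eLpNorm two_ne_zero ENNReal.ofNat_ne_top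
    (measurableSet_box N) (by have := jap_rpow_pos N s; positivity) fun ξ hξ => ?_
  have hweight : jap N ^ s / 2 ^ (-s) ≤ jap ξ ^ s := by
    rw [div_le_iff₀' (by positivity)]
    exact jap_rpow_le hs (by rw [abs_sub_comm]; exact abs_sub_le_one_of_mem_box hξ)
  rw [Real.norm_eq_abs, abs_of_nonneg (mul_nonneg (jap_rpow_pos ξ s).le (norm_nonneg _)), mul_comm]
  exact mul_le_mul hweight (le_norm_cubicIter_bump hξ) (by norm_num) (jap_rpow_pos ξ s).le

theorem lower_bound_of_cubic_estimate_at_bump {s C : ℝ} (hs : s ≤ 0) (hC : 0 ≤ C) (N : ℝ)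
    (h : eLpNorm (fun ξ => jap ξ ^ s * ‖cubicIter (bump N) ξ‖) 2 volume ≤
      ENNReal.ofReal C * (eLpNorm (fun ξ => jap ξ ^ s * ‖bump N ξ‖) 2 volume) ^ 3) :
    7/128 ≤ C * (2 ^ (-s)) ^ 4 * (jap N ^ s) ^ 2 := by
  set V := volume (box N) ^ (1 / (2 : ℝ≥0∞).toReal)
  set u := jap N ^ s
  set K : ℝ := 2 ^ (-s)
  have hu : 0 < u := jap_rpow_pos N s
  have hK : 0 < K := by positivity
  have hV0 : V ≠ 0 := (ENNReal.rpow_pos (by simp [volume_box]) (volume_box_lt_top N).ne).ne'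
  have hV : V ≠ ∞ := ENNReal.rpow_ne_top_of_nonneg (by positivity) (volume_box_lt_top N).ne
  have hV1 : V ≤ 1 := ENNReal.rpow_le_one (by simp [volume_box]) (by positivity)
  have key : ‖7/128 * (u / K)‖ₑ * V ≤ ‖C * (K * u) ^ 3‖ₑ * V :=
    calc ‖7/128 * (u / K)‖ₑ * V
        ≤ eLpNorm (fun ξ => jap ξ ^ s * ‖cubicIter (bump N) ξ‖) 2 volume :=
          le_eLpNorm_weighted_cubicIter_bump hs N
      _ ≤ ENNReal.ofReal C * (‖K * u‖ₑ * V) ^ 3 :=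
          h.trans (by gcongr; exact eLpNorm_weighted_bump_le hs N)
      _ = ‖C * (K * u) ^ 3‖ₑ * V ^ 3 := by
          simp only [enorm_mul, enorm_pow, Real.enorm_of_nonneg hC]; ring
      _ ≤ ‖C * (K * u) ^ 3‖ₑ * V := by gcongr; exact pow_le_of_le_one zero_le hV1 (by norm_num)
  have hreal : 7/128 * (u / K) ≤ C * (K * u) ^ 3 := by
    have := (ENNReal.mul_le_mul_iff_left hV0 hV).1 key
    rwa [Real.enorm_of_nonneg (by positivity), Real.enorm_of_nonneg (by positivity),
      ENNReal.ofReal_le_ofReal_iff (by positivity)] at this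
  calc (7/128 : ℝ) = 7/128 * (u / K) * (K / u) := by field_simp
    _ ≤ C * (K * u) ^ 3 * (K / u) := by gcongr
    _ = C * K ^ 4 * u ^ 2 := by field_simp

end CubicIterate

/-- For `s < 0`, the trilinear estimate
`‖∫₀¹ S(1-t')(|S(t')u₀|² S(t')u₀) dt'‖_{H^s} ≲ ‖u₀‖_{H^s}³` fails:
no uniform constant `C` exists (Fourier-side formulation, quantifying over Fourier data `f`). -/
theorem cubic_iterate_estimate_fails (s : ℝ) (hs : s < 0) :
    ¬ ∃ C : ℝ, 0 < C ∧ ∀ f : ℝ → ℂ,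
      eLpNorm (fun ξ : ℝ => jap ξ ^ s * ‖cubicIter f ξ‖) 2 volume ≤
        ENNReal.ofReal C *
          (eLpNorm (fun ξ : ℝ => jap ξ ^ s * ‖f ξ‖) 2 volume) ^ 3 := by
  rintro ⟨C, hC, hest⟩
  have hsmall : ∀ᶠ N in Filter.atTop, C * (2 ^ (-s)) ^ 4 * (jap N ^ s) ^ 2 < 7/128 := by
    have := ((CubicIterate.tendsto_jap_rpow_atTop hs).pow 2).const_mul (C * (2 ^ (-s)) ^ 4)
    rw [zero_pow two_ne_zero, mul_zero] at this
    exact this.eventually (gt_mem_nhds (by norm_num))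
  obtain ⟨N, hN⟩ := hsmall.exists
  exact hN.not_ge (CubicIterate.lower_bound_of_cubic_estimate_at_bump hs.le hC.le N
    (hest (CubicIterate.bump N)))
end
end

section
/- Let f = χ_{[1,2]}, g = χ_{[N,N+4]} with N ≫ 1. Then for every ξ ∈ [N+2, N+3], the quantity |⟨ξ⟩^{s₁} ∫_ℝ (1 - e^{i(ξ²-ξ₁²+(ξ-ξ₁)³)})/(ξ²-ξ₁²+(ξ-ξ₁)³) · f(ξ₁) g(ξ-ξ₁) / (⟨ξ₁⟩^{s₁} ⟨ξ-ξ₁⟩^{s₂}) dξ₁| is comparable to N^{s₁-s₂-3}. Consequently, the boundedness of this bilinear operator from L²×L² to L² forces s₂ ≥ s₁ - 3. -/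
/-!
For `ξ₁ ∈ [1,2]` and `ξ ∈ [N+2,N+3]` we have `ξ - ξ₁ ∈ [N,N+2]`, so only `ξ₁ ∈ [1,2]`
contributes, the weights `⟨ξ⟩^{s₁}`, `⟨ξ₁⟩^{s₁}`, `⟨ξ-ξ₁⟩^{s₂}` are comparable to
`N^{s₁}`, `1`, `N^{s₂}`, and the resonance `φ` lies in `[N³, 3N³]`. The upper bound is then
`|1 - e^{iφ}| ≤ 2`. For the lower bound take real parts: `Re (1 - e^{iφ})/φ = (1 - cos φ)/φ ≥ 0`,
and since `|∂φ/∂ξ₁| ≥ 3N²`, integration by parts gives `|∫₁² cos φ| = O(N⁻²)`, hence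
`∫₁² (1 - cos φ) ≥ 1/2`. The `L²` norms of the two test functions do not depend on `N`, so an
`L² × L² → L²` bound forces `N^{s₁-s₂-3} = O(1)` as `N → ∞`.
-/

open MeasureTheory Complex Set
open scoped ENNReal

noncomputable section

/-- The Schrödinger–Airy bilinear operator at time 1, Fourier side:
`T f g (ξ) = ⟨ξ⟩^{s₁} |∫ (1-e^{iφ})/φ · f(ξ₁) g(ξ-ξ₁) / (⟨ξ₁⟩^{s₁}⟨ξ-ξ₁⟩^{s₂}) dξ₁|`
with resonance function `φ = ξ² - ξ₁² + (ξ-ξ₁)³`. -/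
def skOp (s₁ s₂ : ℝ) (f g : ℝ → ℂ) (ξ : ℝ) : ℝ :=
  jap ξ ^ s₁ * ‖∫ ξ₁ : ℝ,
    ((1 - Complex.exp (Complex.I * ((ξ ^ 2 - ξ₁ ^ 2 + (ξ - ξ₁) ^ 3 : ℝ) : ℂ))) /
        ((ξ ^ 2 - ξ₁ ^ 2 + (ξ - ξ₁) ^ 3 : ℝ) : ℂ)) *
      f ξ₁ * g (ξ - ξ₁) / ((jap ξ₁ ^ s₁ * jap (ξ - ξ₁) ^ s₂ : ℝ) : ℂ)‖

lemma norm_one_sub_exp_mul_I_le_two (t : ℝ) : ‖1 - exp (I * t)‖ ≤ 2 := by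
  calc ‖1 - exp (I * t)‖ ≤ ‖(1 : ℂ)‖ + ‖exp (t * I)‖ := by rw [mul_comm]; exact norm_sub_le _ _
    _ = 2 := by rw [norm_exp_ofReal_mul_I]; norm_num

lemma re_one_sub_exp_mul_I (t : ℝ) : (1 - exp (I * t)).re = 1 - Real.cos t := by
  rw [sub_re, one_re, mul_comm, exp_ofReal_mul_I_re]

lemma norm_setIntegral_one_sub_exp_div_le {α : Type*} [MeasurableSpace α] {μ : Measure α}
    {s : Set α} {θ u : α → ℝ} {m : ℝ} (hs : μ s < ∞) (hm : 0 < m) (hu : ∀ x ∈ s, m ≤ u x) :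
    ‖∫ x in s, (1 - exp (I * θ x)) / (u x : ℂ) ∂μ‖ ≤ 2 / m * μ.real s := by
  refine norm_setIntegral_le_of_norm_le_const hs fun x hx => ?_
  rw [norm_div, norm_real, Real.norm_of_nonneg (hm.trans_le (hu x hx)).le]
  exact div_le_div₀ zero_le_two (norm_one_sub_exp_mul_I_le_two _) hm (hu x hx)

lemma setIntegral_one_sub_cos_div_le_norm {a b M : ℝ} {θ u : ℝ → ℝ}
    (hθ : ContinuousOn θ (Icc a b)) (hu : ContinuousOn u (Icc a b))
    (hu₀ : ∀ x ∈ Icc a b, 0 < u x) (huM : ∀ x ∈ Icc a b, u x ≤ M) :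
    (∫ x in Icc a b, (1 - Real.cos (θ x))) / M ≤
      ‖∫ x in Icc a b, (1 - exp (I * θ x)) / (u x : ℂ)‖ := by
  have hcos : ContinuousOn (fun x => 1 - Real.cos (θ x)) (Icc a b) := by fun_prop
  have hint : IntegrableOn (fun x => (1 - exp (I * θ x)) / (u x : ℂ)) (Icc a b) :=
    ContinuousOn.integrableOn_Icc <| (by fun_prop : ContinuousOn (fun x => 1 - exp (I * θ x)) _).div
      (continuous_ofReal.comp_continuousOn hu) fun x hx => ofReal_ne_zero.2 (hu₀ x hx).ne'
  have hint' : IntegrableOn (fun x => (1 - Real.cos (θ x)) / u x) (Icc a b) :=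
    ContinuousOn.integrableOn_Icc <| hcos.div hu fun x hx => (hu₀ x hx).ne'
  calc (∫ x in Icc a b, (1 - Real.cos (θ x))) / M
      = ∫ x in Icc a b, (1 - Real.cos (θ x)) / M := (integral_div _ _).symm
    _ ≤ ∫ x in Icc a b, (1 - Real.cos (θ x)) / u x :=
      setIntegral_mono_on (hcos.div_const M).integrableOn_Icc hint' measurableSet_Icc
        fun x hx => div_le_div_of_nonneg_left (by linarith [Real.cos_le_one (θ x)]) (hu₀ x hx)
          (huM x hx)
    _ = ∫ x in Icc a b, ((1 - exp (I * θ x)) / (u x : ℂ)).re :=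
      setIntegral_congr_fun measurableSet_Icc fun x _ => by
        rw [div_ofReal_re, re_one_sub_exp_mul_I]
    _ = (∫ x in Icc a b, (1 - exp (I * θ x)) / (u x : ℂ)).re := integral_re hint
    _ ≤ _ := re_le_norm _

lemma abs_intervalIntegral_cos_le {φ φ' φ'' : ℝ → ℝ} {a b l M : ℝ} (hab : a ≤ b) (hl : 0 < l)
    (hφ : ∀ x ∈ Icc a b, HasDerivAt φ (φ' x) x) (hφ' : ∀ x ∈ Icc a b, HasDerivAt φ' (φ'' x) x)
    (hφ'' : ContinuousOn φ'' (Icc a b)) (hφ'l : ∀ x ∈ Icc a b, l ≤ |φ' x|)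
    (hφ''M : ∀ x ∈ Icc a b, |φ'' x| ≤ M) :
    |∫ x in a..b, Real.cos (φ x)| ≤ 2 / l + M * (b - a) / l ^ 2 := by
  set F := fun x => Real.sin (φ x) / φ' x
  set H := fun x => Real.sin (φ x) * φ'' x / φ' x ^ 2
  have hne : ∀ x ∈ Icc a b, φ' x ≠ 0 := fun x hx =>
    abs_pos.1 (hl.trans_le (hφ'l x hx))
  have hφc : ContinuousOn φ (Icc a b) := fun x hx => (hφ x hx).continuousAt.continuousWithinAt
  have hφ'c : ContinuousOn φ' (Icc a b) := fun x hx => (hφ' x hx).continuousAt.continuousWithinAt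
  have hHc : ContinuousOn H (Icc a b) :=
    (by fun_prop : ContinuousOn (fun x => Real.sin (φ x) * φ'' x) _).div (hφ'c.pow 2)
      fun x hx => pow_ne_zero 2 (hne x hx)
  have hH : IntervalIntegrable H volume a b := (uIcc_of_le hab ▸ hHc).intervalIntegrable
  -- `cos φ = (sin φ / φ')' + sin φ · φ'' / φ'²`
  have hF : ∀ x ∈ uIcc a b, HasDerivAt F (Real.cos (φ x) - H x) x := by
    intro x hx
    rw [uIcc_of_le hab] at hx
    refine ((hφ x hx).sin.div (hφ' x hx) (hne x hx)).congr_deriv ?_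
    simp only [H]
    field_simp [hne x hx]
  have hcos : ContinuousOn (fun x => Real.cos (φ x)) (Icc a b) := by fun_prop
  have hFH : IntervalIntegrable (fun x => Real.cos (φ x) - H x) volume a b :=
    (uIcc_of_le hab ▸ hcos.sub hHc).intervalIntegrable
  have hsplit : ∫ x in a..b, Real.cos (φ x) = (F b - F a) + ∫ x in a..b, H x := by
    rw [← intervalIntegral.integral_eq_sub_of_hasDerivAt hF hFH,
      ← intervalIntegral.integral_add hFH hH]
    simp only [sub_add_cancel]
  have hFl : ∀ x ∈ Icc a b, |F x| ≤ 1 / l := fun x hx => by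
    rw [abs_div]
    exact div_le_div₀ zero_le_one (Real.abs_sin_le_one _) hl (hφ'l x hx)
  have hHl : ∀ x ∈ uIoc a b, ‖H x‖ ≤ M / l ^ 2 := fun x hx => by
    have hx : x ∈ Icc a b := Ioc_subset_Icc_self (uIoc_of_le hab ▸ hx)
    have hM : 0 ≤ M := (abs_nonneg _).trans (hφ''M x hx)
    rw [Real.norm_eq_abs, abs_div, abs_mul, abs_pow]
    calc |Real.sin (φ x)| * |φ'' x| / |φ' x| ^ 2 ≤ 1 * M / l ^ 2 := by
          gcongr
          · exact Real.abs_sin_le_one _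
          · exact hφ''M x hx
          · exact hφ'l x hx
      _ = M / l ^ 2 := by rw [one_mul]
  calc |∫ x in a..b, Real.cos (φ x)| ≤ (|F b| + |F a|) + |∫ x in a..b, H x| := by
        rw [hsplit]; exact (abs_add_le _ _).trans (add_le_add_left (abs_sub _ _) _)
    _ ≤ (1 / l + 1 / l) + M / l ^ 2 * |b - a| := by
        gcongr
        · exact hFl b (right_mem_Icc.2 hab)
        · exact hFl a (left_mem_Icc.2 hab)
        · exact intervalIntegral.norm_integral_le_of_norm_le_const hHl
    _ = 2 / l + M * (b - a) / l ^ 2 := by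
        rw [abs_of_nonneg (sub_nonneg.2 hab)]; ring

lemma enorm_mul_measure_rpow_le_eLpNorm {α E F : Type*} [MeasurableSpace α] {μ : Measure α}
    [NormedAddCommGroup E] [NormedAddCommGroup F] {p : ℝ≥0∞} (hp : p ≠ 0) (hp_top : p ≠ ∞)
    {s : Set α} (hs : MeasurableSet s) {c : E} {f : α → F} (hf : ∀ x ∈ s, ‖c‖ ≤ ‖f x‖) :
    ‖c‖ₑ * μ s ^ (1 / p.toReal) ≤ eLpNorm f p μ := by
  rw [← eLpNorm_indicator_const hs hp hp_top]
  refine eLpNorm_mono fun x => ?_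
  by_cases hx : x ∈ s
  · rw [indicator_of_mem hx]; exact hf x hx
  · rw [indicator_of_notMem hx, norm_zero]; exact norm_nonneg _

lemma nonpos_of_eventually_mul_rpow_le {c B a : ℝ} (hc : 0 < c)
    (h : ∀ᶠ N in Filter.atTop, c * N ^ a ≤ B) : a ≤ 0 := by
  by_contra! ha
  obtain ⟨N, hN, hN'⟩ :=
    (h.and (((tendsto_rpow_atTop ha).const_mul_atTop hc).eventually_gt_atTop B)).exists
  linarith

lemma one_le_jap (x : ℝ) : 1 ≤ jap x :=
  Real.one_le_sqrt.2 (by nlinarith [sq_nonneg x])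

lemma jap_pos (x : ℝ) : 0 < jap x := one_pos.trans_le (one_le_jap x)

lemma abs_le_jap (x : ℝ) : |x| ≤ jap x :=
  Real.abs_le_sqrt (by linarith)

lemma jap_le_abs_add_one (x : ℝ) : jap x ≤ |x| + 1 :=
  Real.sqrt_le_iff.2 ⟨by positivity, by nlinarith [sq_abs x, abs_nonneg x]⟩

lemma continuous_jap : Continuous jap := by unfold jap; fun_prop

lemma rpow_mem_Icc_of_mem_Icc {N K b : ℝ} (s : ℝ) (hN : 0 < N) (hb : b ∈ Icc N (K * N)) :
    b ^ s ∈ Icc (N ^ s / K ^ |s|) (K ^ |s| * N ^ s) := by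
  obtain ⟨h₁, h₂⟩ := hb
  have hr₁ : 1 ≤ b / N := (one_le_div hN).2 h₁
  have hr₂ : b / N ≤ K := (div_le_iff₀ hN).2 h₂
  have hb : b ^ s = (b / N) ^ s * N ^ s := by
    rw [← Real.mul_rpow (by linarith) hN.le, div_mul_cancel₀ _ hN.ne']
  have hNs : 0 < N ^ s := Real.rpow_pos_of_pos hN s
  have hK₀ : 0 < K := by linarith
  rw [hb]
  constructor
  · rw [div_eq_inv_mul, ← Real.rpow_neg hK₀.le]
    refine mul_le_mul_of_nonneg_right ?_ hNs.le
    calc K ^ (-|s|) ≤ (b / N) ^ (-|s|) :=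
          Real.rpow_le_rpow_of_nonpos (by linarith) hr₂ (neg_nonpos.2 (abs_nonneg s))
      _ ≤ (b / N) ^ s := Real.rpow_le_rpow_of_exponent_le hr₁ (neg_abs_le s)
  · refine mul_le_mul_of_nonneg_right ?_ hNs.le
    calc (b / N) ^ s ≤ (b / N) ^ |s| := Real.rpow_le_rpow_of_exponent_le hr₁ (le_abs_self s)
      _ ≤ K ^ |s| := Real.rpow_le_rpow (by linarith) hr₂ (abs_nonneg s)

lemma jap_rpow_mem_Icc {N y : ℝ} (s : ℝ) (hN : 1 ≤ N) (hy : y ∈ Icc N (2 * N)) :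
    jap y ^ s ∈ Icc (N ^ s / 3 ^ |s|) (3 ^ |s| * N ^ s) := by
  refine rpow_mem_Icc_of_mem_Icc s (by linarith) ⟨?_, ?_⟩
  · exact hy.1.trans ((le_abs_self y).trans (abs_le_jap y))
  · have := jap_le_abs_add_one y
    rw [abs_of_nonneg (by linarith [hy.1])] at this
    linarith [hy.2]

lemma rpow_sub_sub_three {N : ℝ} (hN : 0 < N) (a b : ℝ) :
    N ^ (a - b - 3) = N ^ a / (N ^ 3 * N ^ b) := by
  rw [Real.rpow_sub hN, Real.rpow_sub hN, Real.rpow_ofNat, div_div, mul_comm]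

def chiIcc (a b : ℝ) : ℝ → ℂ := fun x => if a ≤ x ∧ x ≤ b then 1 else 0

def resonance (ξ x : ℝ) : ℝ := ξ ^ 2 - x ^ 2 + (ξ - x) ^ 3

section Resonance

variable {N ξ x : ℝ}

lemma hasDerivAt_resonance (ξ x : ℝ) :
    HasDerivAt (resonance ξ) (-(2 * x) - 3 * (ξ - x) ^ 2) x := by
  have h := ((hasDerivAt_pow 2 x).const_sub (ξ ^ 2)).fun_add
    (((hasDerivAt_id' x).const_sub ξ).fun_pow 3)
  exact h.congr_deriv (by ring)

lemma hasDerivAt_deriv_resonance (ξ x : ℝ) :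
    HasDerivAt (fun x => -(2 * x) - 3 * (ξ - x) ^ 2) (6 * (ξ - x) - 2) x := by
  have h := ((hasDerivAt_id' x).const_mul 2).fun_neg.fun_sub
    ((((hasDerivAt_id' x).const_sub ξ).fun_pow 2).const_mul 3)
  exact h.congr_deriv (by ring)

lemma resonance_mem_Icc (hN : 10 ≤ N) (hξ : ξ ∈ Icc (N + 2) (N + 3)) (hx : x ∈ Icc 1 2) :
    resonance ξ x ∈ Icc (N ^ 3) (3 * N ^ 3) := by
  obtain ⟨hξ₁, hξ₂⟩ := hξ
  obtain ⟨hx₁, hx₂⟩ := hx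
  have hy₁ : N ≤ ξ - x := by linarith
  have hy₂ : ξ - x ≤ N + 2 := by linarith
  unfold resonance
  constructor
  · nlinarith [pow_le_pow_left₀ (by linarith) hy₁ 3]
  · have h₁ : (ξ - x) ^ 3 ≤ (N + 2) ^ 3 := pow_le_pow_left₀ (by linarith) hy₂ 3
    have h₂ : ξ ^ 2 ≤ (N + 3) ^ 2 := pow_le_pow_left₀ (by linarith) hξ₂ 2
    nlinarith [mul_le_mul hN hN (by norm_num) (by linarith)]

lemma intervalIntegral_cos_resonance_le (hN : 10 ≤ N) (hξ : ξ ∈ Icc (N + 2) (N + 3)) :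
    ∫ x in (1 : ℝ)..2, Real.cos (resonance ξ x) ≤ 1 / 2 := by
  obtain ⟨hξ₁, hξ₂⟩ := hξ
  have h := abs_intervalIntegral_cos_le (l := 3 * N ^ 2) (M := 7 * N) one_le_two (by positivity)
    (fun x _ => hasDerivAt_resonance ξ x) (fun x _ => hasDerivAt_deriv_resonance ξ x)
    (by fun_prop) (fun x ⟨hx₁, hx₂⟩ => ?_) (fun x ⟨hx₁, hx₂⟩ => ?_)
  · refine (le_abs_self _).trans (h.trans ?_)
    rw [div_add_div _ _ (by positivity) (by positivity), div_le_div_iff₀ (by positivity) two_pos]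
    have h₃ : 10 * N ^ 5 ≤ N ^ 6 := by nlinarith [pow_pos (by linarith : (0 : ℝ) < N) 5]
    have h₄ : 10 * N ^ 3 ≤ N ^ 4 := by nlinarith [pow_pos (by linarith : (0 : ℝ) < N) 3]
    nlinarith [pow_pos (by linarith : (0 : ℝ) < N) 4]
  · rw [abs_of_neg (by nlinarith)]
    nlinarith
  · rw [abs_le]
    constructor <;> nlinarith

lemma half_le_setIntegral_one_sub_cos_resonance (hN : 10 ≤ N) (hξ : ξ ∈ Icc (N + 2) (N + 3)) :
    1 / 2 ≤ ∫ x in Icc (1 : ℝ) 2, (1 - Real.cos (resonance ξ x)) := by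
  have hcos : IntervalIntegrable (fun x => Real.cos (resonance ξ x)) volume 1 2 := by
    apply Continuous.intervalIntegrable; unfold resonance; fun_prop
  rw [integral_Icc_eq_integral_Ioc, ← intervalIntegral.integral_of_le one_le_two,
    intervalIntegral.integral_sub intervalIntegrable_const hcos, intervalIntegral.integral_const]
  norm_num
  linarith [intervalIntegral_cos_resonance_le hN hξ]

lemma skOp_chiIcc_eq (s₁ s₂ : ℝ) (hξ : ξ ∈ Icc (N + 2) (N + 5)) :
    skOp s₁ s₂ (chiIcc 1 2) (chiIcc N (N + 4)) ξ =
      jap ξ ^ s₁ * ‖∫ x in Icc (1 : ℝ) 2, (1 - exp (I * resonance ξ x)) /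
        ((resonance ξ x * (jap x ^ s₁ * jap (ξ - x) ^ s₂) : ℝ) : ℂ)‖ := by
  unfold skOp chiIcc
  rw [← integral_indicator measurableSet_Icc]
  congr 3
  funext x
  by_cases hx : x ∈ Icc (1 : ℝ) 2
  · have hξx : N ≤ ξ - x ∧ ξ - x ≤ N + 4 := by
      constructor <;> linarith [hx.1, hx.2, hξ.1, hξ.2]
    rw [indicator_of_mem hx, if_pos (mem_Icc.1 hx), if_pos hξx, mul_one, mul_one, div_div,
      ← ofReal_mul, resonance]
  · rw [indicator_of_notMem hx, if_neg (fun h => hx (mem_Icc.2 h))]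
    simp

lemma resonance_mul_weight_mem_Icc (s₁ s₂ : ℝ) (hN : 10 ≤ N) (hξ : ξ ∈ Icc (N + 2) (N + 3))
    (hx : x ∈ Icc 1 2) :
    resonance ξ x * (jap x ^ s₁ * jap (ξ - x) ^ s₂) ∈
      Icc (N ^ 3 * (1 / 3 ^ |s₁| * (N ^ s₂ / 3 ^ |s₂|)))
        (3 * N ^ 3 * (3 ^ |s₁| * (3 ^ |s₂| * N ^ s₂))) := by
  have hφ := resonance_mem_Icc hN hξ hx
  have h₁ := jap_rpow_mem_Icc s₁ le_rfl (by rwa [mul_one])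
  have h₂ := jap_rpow_mem_Icc s₂ (N := N) (y := ξ - x) (by linarith)
    ⟨by linarith [hx.2, hξ.1], by linarith [hx.1, hξ.2]⟩
  rw [Real.one_rpow, mul_one] at h₁
  have hN₀ : 0 < N := by linarith
  have hx₀ := (Real.rpow_pos_of_pos (jap_pos x) s₁).le
  have hy₀ := (Real.rpow_pos_of_pos (jap_pos (ξ - x)) s₂).le
  constructor
  · exact mul_le_mul hφ.1 (mul_le_mul h₁.1 h₂.1 (by positivity) hx₀) (by positivity)
      (by linarith [hφ.1, pow_pos hN₀ 3])
  · exact mul_le_mul hφ.2 (mul_le_mul h₁.2 h₂.2 hy₀ (by positivity)) (mul_nonneg hx₀ hy₀)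
      (by positivity)

lemma continuous_resonance_mul_weight (s₁ s₂ ξ : ℝ) :
    Continuous fun x => resonance ξ x * (jap x ^ s₁ * jap (ξ - x) ^ s₂) := by
  have hjap (s : ℝ) : Continuous fun x => jap x ^ s :=
    continuous_jap.rpow_const fun x => Or.inl (jap_pos x).ne'
  unfold resonance
  exact (by fun_prop : Continuous fun x => ξ ^ 2 - x ^ 2 + (ξ - x) ^ 3).mul
    ((hjap s₁).mul ((hjap s₂).comp (continuous_sub_left ξ)))

lemma skOp_chiIcc_le (s₁ s₂ : ℝ) (hN : 10 ≤ N) (hξ : ξ ∈ Icc (N + 2) (N + 3)) :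
    skOp s₁ s₂ (chiIcc 1 2) (chiIcc N (N + 4)) ξ ≤
      2 * (3 ^ |s₁| * 3 ^ |s₁| * 3 ^ |s₂|) * N ^ (s₁ - s₂ - 3) := by
  have hN₀ : 0 < N := by linarith
  have hjap := jap_rpow_mem_Icc s₁ (y := ξ) (by linarith) ⟨by linarith [hξ.1], by linarith [hξ.2]⟩
  have hint := norm_setIntegral_one_sub_exp_div_le (μ := volume) (θ := resonance ξ)
    (u := fun x => resonance ξ x * (jap x ^ s₁ * jap (ξ - x) ^ s₂)) measure_Icc_lt_top
    (by positivity) fun x hx => (resonance_mul_weight_mem_Icc s₁ s₂ hN hξ hx).1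
  rw [Real.volume_real_Icc_of_le one_le_two] at hint
  rw [skOp_chiIcc_eq s₁ s₂ ⟨hξ.1, by linarith [hξ.2]⟩]
  calc _ ≤ 3 ^ |s₁| * N ^ s₁ * (2 / (N ^ 3 * (1 / 3 ^ |s₁| * (N ^ s₂ / 3 ^ |s₂|))) * (2 - 1)) :=
        mul_le_mul hjap.2 hint (norm_nonneg _) (by positivity)
    _ = _ := by rw [rpow_sub_sub_three hN₀]; field_simp; ring

lemma le_skOp_chiIcc (s₁ s₂ : ℝ) (hN : 10 ≤ N) (hξ : ξ ∈ Icc (N + 2) (N + 3)) :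
    (6 * (3 ^ |s₁| * 3 ^ |s₁| * 3 ^ |s₂|))⁻¹ * N ^ (s₁ - s₂ - 3) ≤
      skOp s₁ s₂ (chiIcc 1 2) (chiIcc N (N + 4)) ξ := by
  have hN₀ : 0 < N := by linarith
  have hjap := jap_rpow_mem_Icc s₁ (y := ξ) (by linarith) ⟨by linarith [hξ.1], by linarith [hξ.2]⟩
  have hint := setIntegral_one_sub_cos_div_le_norm (θ := resonance ξ)
    (u := fun x => resonance ξ x * (jap x ^ s₁ * jap (ξ - x) ^ s₂))
    (by unfold resonance; fun_prop) (continuous_resonance_mul_weight s₁ s₂ ξ).continuousOn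
    (fun x hx => lt_of_lt_of_le (by positivity) (resonance_mul_weight_mem_Icc s₁ s₂ hN hξ hx).1)
    fun x hx => (resonance_mul_weight_mem_Icc s₁ s₂ hN hξ hx).2
  rw [skOp_chiIcc_eq s₁ s₂ ⟨hξ.1, by linarith [hξ.2]⟩]
  calc _ = N ^ s₁ / 3 ^ |s₁| * (1 / 2 / (3 * N ^ 3 * (3 ^ |s₁| * (3 ^ |s₂| * N ^ s₂)))) := by
        rw [rpow_sub_sub_three hN₀]; field_simp; ring
    _ ≤ jap ξ ^ s₁ * ((∫ x in Icc (1 : ℝ) 2, (1 - Real.cos (resonance ξ x))) /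
          (3 * N ^ 3 * (3 ^ |s₁| * (3 ^ |s₂| * N ^ s₂)))) := by
        gcongr
        · exact (Real.rpow_pos_of_pos (jap_pos ξ) s₁).le
        · exact hjap.1
        · exact half_le_setIntegral_one_sub_cos_resonance hN hξ
    _ ≤ _ := mul_le_mul_of_nonneg_left hint (Real.rpow_pos_of_pos (jap_pos ξ) s₁).le

end Resonance

lemma eLpNorm_chiIcc {a b : ℝ} (hab : a ≤ b) :
    eLpNorm (chiIcc a b) 2 volume = ENNReal.ofReal √(b - a) := by
  have : chiIcc a b = (Icc a b).indicator fun _ => 1 := by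
    funext x
    simp only [chiIcc, indicator, mem_Icc]
  rw [this, eLpNorm_indicator_const measurableSet_Icc two_ne_zero ENNReal.ofNat_ne_top, enorm_one,
    one_mul, Real.volume_Icc, ENNReal.ofReal_rpow_of_nonneg (sub_nonneg.2 hab) (by norm_num),
    Real.sqrt_eq_rpow]
  norm_num

lemma le_two_mul_of_eLpNorm_skOp_le {s₁ s₂ C N a : ℝ} (hC : 0 < C) (ha : 0 ≤ a)
    (hbound : eLpNorm (fun ξ => skOp s₁ s₂ (chiIcc 1 2) (chiIcc N (N + 4)) ξ) 2 volume ≤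
      ENNReal.ofReal C * eLpNorm (chiIcc 1 2) 2 volume * eLpNorm (chiIcc N (N + 4)) 2 volume)
    (h : ∀ ξ ∈ Icc (N + 2) (N + 3), a ≤ skOp s₁ s₂ (chiIcc 1 2) (chiIcc N (N + 4)) ξ) :
    a ≤ 2 * C := by
  have hlow := enorm_mul_measure_rpow_le_eLpNorm (μ := volume) two_ne_zero ENNReal.ofNat_ne_top
    measurableSet_Icc (c := a) (f := fun ξ => skOp s₁ s₂ (chiIcc 1 2) (chiIcc N (N + 4)) ξ)
    fun ξ hξ => by
      rw [Real.norm_of_nonneg ha, Real.norm_of_nonneg (ha.trans (h ξ hξ))]; exact h ξ hξ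
  rw [Real.volume_Icc, show N + 3 - (N + 2) = 1 by ring, ENNReal.ofReal_one, ENNReal.one_rpow,
    mul_one, Real.enorm_of_nonneg ha] at hlow
  have h4 : √(N + 4 - N) = 2 := by
    rw [add_sub_cancel_left, show (4 : ℝ) = 2 ^ 2 by norm_num, Real.sqrt_sq zero_le_two]
  rw [eLpNorm_chiIcc one_le_two, eLpNorm_chiIcc (by linarith), h4, show (2 : ℝ) - 1 = 1 by norm_num,
    Real.sqrt_one, ENNReal.ofReal_one, mul_one, ← ENNReal.ofReal_mul hC.le] at hbound
  rw [mul_comm]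
  exact (ENNReal.ofReal_le_ofReal_iff (by positivity)).1 (hlow.trans hbound)

/-- With `f = χ_{[1,2]}`, `g = χ_{[N,N+4]}` and `N` large, the quantity is comparable to
`N^{s₁-s₂-3}` for every `ξ ∈ [N+2,N+3]`; consequently `L²×L² → L²` boundedness
forces `s₂ ≥ s₁ - 3`. -/
theorem sk_iterate_lower_bound (s₁ s₂ : ℝ) :
    (∃ c C N₀ : ℝ, 0 < c ∧ 0 < C ∧ 0 < N₀ ∧ ∀ N : ℝ, N₀ ≤ N →
      ∀ ξ ∈ Icc (N + 2) (N + 3),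
        c * N ^ (s₁ - s₂ - 3) ≤
            skOp s₁ s₂ (fun x => if 1 ≤ x ∧ x ≤ 2 then 1 else 0)
              (fun x => if N ≤ x ∧ x ≤ N + 4 then 1 else 0) ξ ∧
          skOp s₁ s₂ (fun x => if 1 ≤ x ∧ x ≤ 2 then 1 else 0)
              (fun x => if N ≤ x ∧ x ≤ N + 4 then 1 else 0) ξ ≤
            C * N ^ (s₁ - s₂ - 3)) ∧
    ((∃ C : ℝ, 0 < C ∧ ∀ f g : ℝ → ℂ,
        eLpNorm (fun ξ => skOp s₁ s₂ f g ξ) 2 volume ≤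
          ENNReal.ofReal C * eLpNorm f 2 volume * eLpNorm g 2 volume) →
      s₁ - 3 ≤ s₂) := by
  set A : ℝ := 3 ^ |s₁| * 3 ^ |s₁| * 3 ^ |s₂|
  refine ⟨⟨(6 * A)⁻¹, 2 * A, 10, by positivity, by positivity, by norm_num,
    fun N hN ξ hξ => ⟨le_skOp_chiIcc s₁ s₂ hN hξ, skOp_chiIcc_le s₁ s₂ hN hξ⟩⟩, ?_⟩
  rintro ⟨C, hC, hbound⟩
  have hgrowth : ∀ N : ℝ, 10 ≤ N → (6 * A)⁻¹ * N ^ (s₁ - s₂ - 3) ≤ 2 * C := fun N hN =>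
    le_two_mul_of_eLpNorm_skOp_le hC (by positivity) (hbound _ _)
      fun ξ hξ => le_skOp_chiIcc s₁ s₂ hN hξ
  linarith [nonpos_of_eventually_mul_rpow_le (by positivity)
    (Filter.eventually_atTop.2 ⟨10, hgrowth⟩)]
end
end

section
/- There is a constant C such that for all ξ with |ξ| sufficiently large, ‖χ_{|y(ξ₂)| ≪ 1} (1 - e^{iξ₂(2ξ-ξ₂+ξ₂²)})/(2ξ-ξ₂+ξ₂²)‖²_{L²({ξ₂ : |ξ₂| ≫ 1})} ≤ C, where y(ξ₂) = 2ξ - ξ₂ + ξ₂². The proof uses the change of variables y = y(ξ₂) with |dy| ∼ |ξ|^{1/2}|dξ₂| on the set |y| ≪ 1, and the bound |1-e^{iξ₂ y}| ≲ min{1, |ξ|^{1/2}|y|}, giving ∫_{|y|≪1} min{1, |ξ|y²}/y² · dy/|ξ|^{1/2} ≲ 1. -/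
/-!
With `y(t) = 2ξ - t + t²`, the bound `|1 - e^{iθ}| ≤ min 2 |θ|` dominates the integrand by
`min (4 / y²) (t²)`, cutoffs or not. For `ξ ≥ 1` one has `y ≥ 1 + (t - 1/2)²`: no resonance.
For `ξ = -K ≤ -1`, `y = (t - r₊)(t - r₋)` with `r± = (1 ± √(1 + 8K)) / 2 ≈ ±√(2K)`. Near the root on
the side of `t`, the other factor is at least `√K` (this is `|y'| ∼ |ξ|^{1/2}`) and `|t| ≤ 3√K`,
so the integrand is at most `min (9K) (4 / (K (t - r)²))`: a bump of height `9K` and width `1/K`.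
Cauchy profiles dominate these bumps with mass independent of `K`, giving the bound `40π`.
-/

open MeasureTheory Complex

lemma norm_one_sub_exp_I_mul_sq_le (θ : ℝ) :
    ‖1 - Complex.exp (I * θ)‖ ^ 2 ≤ min 4 (θ ^ 2) := by
  have h_lip : ‖1 - Complex.exp (I * θ)‖ ≤ |θ| := by
    simpa [norm_sub_rev] using Real.norm_exp_I_mul_ofReal_sub_one_le (x := θ)
  have h_two : ‖1 - Complex.exp (I * θ)‖ ≤ 2 := by
    refine (norm_sub_le _ _).trans ?_
    rw [norm_exp_I_mul_ofReal]
    norm_num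
  refine le_min ?_ ?_
  · nlinarith [norm_nonneg (1 - Complex.exp (I * θ))]
  · simpa only [sq_abs] using pow_le_pow_left₀ (norm_nonneg _) h_lip 2

lemma norm_one_sub_exp_div_sq_le (x y : ℝ) :
    ‖(1 - Complex.exp (I * ((x * y : ℝ) : ℂ))) / (y : ℂ)‖ ^ 2 ≤ min (4 / y ^ 2) (x ^ 2) := by
  rcases eq_or_ne y 0 with rfl | hy
  · simp [sq_nonneg]
  rw [norm_div, div_pow, Complex.norm_real, Real.norm_eq_abs, sq_abs]
  have h := norm_one_sub_exp_I_mul_sq_le (x * y)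
  refine le_min ?_ ?_
  · gcongr
    exact h.trans (min_le_left _ _)
  · rw [div_le_iff₀ (by positivity), ← mul_pow]
    exact h.trans (min_le_right _ _)

lemma min_self_div_le_two_mul_div_one_add {A s : ℝ} (hA : 0 ≤ A) (hs : 0 ≤ s) :
    min A (A / s) ≤ 2 * A / (1 + s) := by
  rcases le_total s 1 with h | h
  · calc min A (A / s) ≤ A := min_le_left _ _
      _ ≤ 2 * A / (1 + s) := by rw [le_div_iff₀ (by positivity)]; nlinarith
  · calc min A (A / s) ≤ A / s := min_le_right _ _
      _ ≤ 2 * A / (1 + s) := by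
        rw [div_le_div_iff₀ (by positivity) (by positivity)]; nlinarith

lemma integrable_div_one_add_sq_mul_sub (A r : ℝ) {c : ℝ} (hc : c ≠ 0) :
    Integrable fun t : ℝ => A / (1 + (c * (t - r)) ^ 2) := by
  have h := ((integrable_inv_one_add_sq.const_mul A).comp_sub_right (c * r)).comp_mul_left' hc
  refine h.congr (Filter.Eventually.of_forall fun t => ?_)
  simp only [div_eq_mul_inv, mul_sub]

lemma integral_div_one_add_sq_mul_sub (A r : ℝ) {c : ℝ} (hc : 0 < c) :
    ∫ t : ℝ, A / (1 + (c * (t - r)) ^ 2) = A * Real.pi / c := by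
  calc ∫ t : ℝ, A / (1 + (c * (t - r)) ^ 2)
      = ∫ t : ℝ, (fun y : ℝ => A / (1 + (y - c * r) ^ 2)) (c * t) := by simp only [mul_sub]
    _ = |c⁻¹| • ∫ y : ℝ, A / (1 + y ^ 2) := by
      rw [Measure.integral_comp_mul_left (fun y => A / (1 + (y - c * r) ^ 2)),
        integral_sub_right_eq_self (fun y => A / (1 + y ^ 2))]
    _ = A * Real.pi / c := by
      simp only [div_eq_mul_inv, integral_const_mul, integral_univ_inv_one_add_sq,
        abs_of_pos (inv_pos.mpr hc), smul_eq_mul]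
      ring

lemma integrable_div_one_add_sq_sub (A r : ℝ) :
    Integrable fun t : ℝ => A / (1 + (t - r) ^ 2) := by
  simpa only [one_mul] using integrable_div_one_add_sq_mul_sub A r one_ne_zero

lemma integral_div_one_add_sq_sub (A r : ℝ) :
    ∫ t : ℝ, A / (1 + (t - r) ^ 2) = A * Real.pi := by
  simpa only [one_mul, div_one] using integral_div_one_add_sq_mul_sub A r one_pos

/-- Majorant of the kernel near the root `r` of `y` when `ξ = -K`, with `u = t - r`: the first
term covers `|u| ≥ 1`, the second the bump `min (9K) (4 / (K u²))` of width `1/K`; their masses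
are `8π` and `12π`. -/
noncomputable def rootProfile (K r t : ℝ) : ℝ :=
  8 / (1 + (t - r) ^ 2) + 18 * K / (1 + (3 * K / 2 * (t - r)) ^ 2)

lemma integrable_rootProfile {K : ℝ} (hK : 0 < K) (r : ℝ) : Integrable (rootProfile K r) :=
  (integrable_div_one_add_sq_sub 8 r).add
    (integrable_div_one_add_sq_mul_sub (18 * K) r (by positivity))

lemma integral_rootProfile {K : ℝ} (hK : 0 < K) (r : ℝ) :
    ∫ t, rootProfile K r t = 20 * Real.pi := by
  unfold rootProfile
  rw [integral_add (integrable_div_one_add_sq_sub 8 r)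
    (integrable_div_one_add_sq_mul_sub (18 * K) r (by positivity)), integral_div_one_add_sq_sub,
    integral_div_one_add_sq_mul_sub (18 * K) r (by positivity)]
  field_simp
  ring

lemma rootProfile_nonneg {K : ℝ} (hK : 0 ≤ K) (r t : ℝ) : 0 ≤ rootProfile K r t := by
  unfold rootProfile
  positivity

lemma min_div_sq_le_rootProfile {K r t v : ℝ} (hK : 0 < K) (hv₁ : 1 ≤ v ^ 2) (hvK : K ≤ v ^ 2)
    (ht : (t - r) ^ 2 ≤ 1 → t ^ 2 ≤ 9 * K) :
    min (4 / ((t - r) * v) ^ 2) (t ^ 2) ≤ rootProfile K r t := by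
  unfold rootProfile
  set u := t - r
  rcases eq_or_ne u 0 with hu | hu
  · simp only [hu, zero_mul, ne_eq, OfNat.ofNat_ne_zero, not_false_eq_true, zero_pow, div_zero]
    exact (min_le_left _ _).trans (by positivity)
  have h_far : 0 ≤ 8 / (1 + u ^ 2) := by positivity
  have h_near : 0 ≤ 18 * K / (1 + (3 * K / 2 * u) ^ 2) := by positivity
  rcases le_total (u ^ 2) 1 with hu₁ | hu₁
  · have h : min (4 / (u * v) ^ 2) (t ^ 2) ≤ min (9 * K) (9 * K / (3 * K / 2 * u) ^ 2) := by
      rw [min_comm]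
      refine min_le_min (ht hu₁) ?_
      rw [show 9 * K / (3 * K / 2 * u) ^ 2 = 4 / (K * u ^ 2) by field_simp; ring]
      exact div_le_div_of_nonneg_left (by norm_num) (by positivity) (by rw [mul_pow]; nlinarith)
    have := min_self_div_le_two_mul_div_one_add (by positivity : 0 ≤ 9 * K)
      (sq_nonneg (3 * K / 2 * u))
    rw [show 2 * (9 * K) = 18 * K by ring] at this
    linarith
  · have h : min (4 / (u * v) ^ 2) (t ^ 2) ≤ min 4 (4 / u ^ 2) := by
      refine (min_le_left _ _).trans (le_min ?_ ?_)
      · exact div_le_self (by norm_num) (by rw [mul_pow]; nlinarith)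
      · exact div_le_div_of_nonneg_left (by norm_num) (by positivity) (by rw [mul_pow]; nlinarith)
    have := min_self_div_le_two_mul_div_one_add (by norm_num : (0 : ℝ) ≤ 4) (sq_nonneg u)
    linarith

lemma min_four_div_sq_le_rootProfile_add {ξ : ℝ} (hξ : ξ ≤ -1) (t : ℝ) :
    min (4 / (2 * ξ - t + t ^ 2) ^ 2) (t ^ 2) ≤
      rootProfile (-ξ) ((1 + √(1 - 8 * ξ)) / 2) t +
        rootProfile (-ξ) ((1 - √(1 - 8 * ξ)) / 2) t := by
  set R := √(1 - 8 * ξ)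
  have hR : R ^ 2 = 1 - 8 * ξ := Real.sq_sqrt (by linarith)
  obtain ⟨s, hs, hs₀⟩ : ∃ s : ℝ, s ^ 2 = -ξ ∧ 0 ≤ s :=
    ⟨√(-ξ), Real.sq_sqrt (by linarith), Real.sqrt_nonneg _⟩
  have hs₁ : 1 ≤ s := by nlinarith
  have hR_lo : 2 * s + 1 ≤ R := by nlinarith [Real.sqrt_nonneg (1 - 8 * ξ)]
  have hR_hi : R ≤ 6 * s - 3 := by nlinarith [Real.sqrt_nonneg (1 - 8 * ξ)]
  have hfactor : 2 * ξ - t + t ^ 2 = (t - (1 + R) / 2) * (t - (1 - R) / 2) := by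
    linear_combination hR / 4
  have hK : 0 < -ξ := by linarith
  have hP₁ := rootProfile_nonneg hK.le ((1 + R) / 2) t
  have hP₂ := rootProfile_nonneg hK.le ((1 - R) / 2) t
  rw [hfactor]
  rcases le_total 0 t with ht | ht
  · have := min_div_sq_le_rootProfile (t := t) (r := (1 + R) / 2) (v := t - (1 - R) / 2) hK
      (by nlinarith) (by nlinarith) (fun hu => by nlinarith)
    linarith
  · rw [mul_comm]
    have := min_div_sq_le_rootProfile (t := t) (r := (1 - R) / 2) (v := t - (1 + R) / 2) hK
      (by nlinarith) (by nlinarith) (fun hu => by nlinarith)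
    linarith

lemma min_four_div_sq_le_of_one_le {ξ : ℝ} (hξ : 1 ≤ ξ) (t : ℝ) :
    min (4 / (2 * ξ - t + t ^ 2) ^ 2) (t ^ 2) ≤ 4 / (1 + (t - 1 / 2) ^ 2) := by
  have hy : 1 + (t - 1 / 2) ^ 2 ≤ 2 * ξ - t + t ^ 2 := by nlinarith
  exact (min_le_left _ _).trans
    (div_le_div_of_nonneg_left (by norm_num) (by positivity) (by nlinarith))

lemma exists_integrable_majorant {ξ : ℝ} (hξ : 1 ≤ |ξ|) :
    ∃ g : ℝ → ℝ, Integrable g ∧ (∀ t, min (4 / (2 * ξ - t + t ^ 2) ^ 2) (t ^ 2) ≤ g t) ∧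
      ∫ t, g t ≤ 40 * Real.pi := by
  rcases le_abs'.mp hξ with hneg | hpos
  · have hK : 0 < -ξ := by linarith
    refine ⟨fun t => rootProfile (-ξ) ((1 + √(1 - 8 * ξ)) / 2) t +
      rootProfile (-ξ) ((1 - √(1 - 8 * ξ)) / 2) t, (integrable_rootProfile hK _).add
      (integrable_rootProfile hK _), min_four_div_sq_le_rootProfile_add hneg, ?_⟩
    rw [integral_add (integrable_rootProfile hK _) (integrable_rootProfile hK _),
      integral_rootProfile hK, integral_rootProfile hK]
    linarith
  · refine ⟨_, integrable_div_one_add_sq_sub 4 (1 / 2), min_four_div_sq_le_of_one_le hpos, ?_⟩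
    rw [integral_div_one_add_sq_sub]
    linarith [Real.pi_pos]

theorem resonant_kernel_l2_bound_general (a b : ℝ) :
    ∃ C M : ℝ, 0 < C ∧ 0 < M ∧ ∀ ξ : ℝ, M ≤ |ξ| →
      (∫ ξ₂ : ℝ,
        (if a ≤ |ξ₂| ∧ |2 * ξ - ξ₂ + ξ₂ ^ 2| ≤ b then
          ‖(1 - Complex.exp (Complex.I * ((ξ₂ * (2 * ξ - ξ₂ + ξ₂ ^ 2) : ℝ) : ℂ))) /
              ((2 * ξ - ξ₂ + ξ₂ ^ 2 : ℝ) : ℂ)‖ ^ 2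
        else 0)) ≤ C := by
  refine ⟨40 * Real.pi, 1, by positivity, one_pos, fun ξ hξ => ?_⟩
  obtain ⟨g, hg_int, hg_le, hg_bound⟩ := exists_integrable_majorant hξ
  have hg_nonneg : ∀ t, 0 ≤ g t := fun t => (le_min (by positivity) (by positivity)).trans (hg_le t)
  refine le_trans (integral_mono_of_nonneg (Filter.Eventually.of_forall fun t => ?_) hg_int
    (Filter.Eventually.of_forall fun t => ?_)) hg_bound
  · dsimp only
    split_ifs <;> positivity
  · dsimp only
    split_ifs
    · exact (norm_one_sub_exp_div_sq_le t _).trans (hg_le t)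
    · exact hg_nonneg t

/-- Core resonant kernel estimate: for any thresholds `a` (for `|ξ₂| ≫ 1`, i.e. `|ξ₂| ≥ a`)
and `b > 0` (for `|y| ≪ 1`, i.e. `|y(ξ₂)| ≤ b`), there are `C, M` such that for all
`|ξ| ≥ M`, `∫ χ · |(1 - e^{iξ₂(2ξ-ξ₂+ξ₂²)})/(2ξ-ξ₂+ξ₂²)|² dξ₂ ≤ C`,
where `y(ξ₂) = 2ξ - ξ₂ + ξ₂²`. -/
theorem resonant_kernel_l2_bound (a b : ℝ) (hb : 0 < b) :
    ∃ C M : ℝ, 0 < C ∧ 0 < M ∧ ∀ ξ : ℝ, M ≤ |ξ| →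
      (∫ ξ₂ : ℝ,
        (if a ≤ |ξ₂| ∧ |2 * ξ - ξ₂ + ξ₂ ^ 2| ≤ b then
          ‖(1 - Complex.exp (Complex.I * ((ξ₂ * (2 * ξ - ξ₂ + ξ₂ ^ 2) : ℝ) : ℂ))) /
              ((2 * ξ - ξ₂ + ξ₂ ^ 2 : ℝ) : ℂ)‖ ^ 2
        else 0)) ≤ C :=
  resonant_kernel_l2_bound_general a b
end

section
/- For each fixed ξ₁ with |ξ₁| ≫ 1, ‖χ_{1 ≪ |ξ|² ∼ |ξ₁|} min{1, |ξ₁|^{1/2}|ξ - 2ξ₁ - ξ²|} / |ξ - 2ξ₁ - ξ²|‖²_{L²_ξ} ≲ 1, with constant independent of ξ₁. The proof substitutes y(ξ) = ξ - 2ξ₁ - ξ², for which |dy| ∼ |ξ₁|^{1/2}|dξ| on the region 1 ≪ |ξ|² ∼ |ξ₁|, and evaluates ∫ min{1, |ξ₁| y²}/y² · dy/|ξ₁|^{1/2} ≲ 1. -/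
/-!
Write `y = ξ - 2ξ₁ - ξ²` and `a = |ξ₁|^{1/2}`. The kernel `(min{1, a|y|}/|y|)²` is at most
`min{a², 1/y²} ≤ 2a²/(1 + a²y²)`, and in fact its integral over the whole line is bounded.

For `ξ₁ < 0`, `y = -(ξ - r₊)(ξ - r₋)` with real roots at distance `√(1 - 8ξ₁) ≥ 2a`; near each
root the other factor is at least `a`, so `a²y² ≥ a⁴(ξ - r)²` and the kernel is dominated by two
Lorentzians `2a²/(1 + a⁴(ξ - r)²)`, each of integral `2π`; this replaces the substitution
`dy ∼ a dξ`. For `ξ₁ ≥ 1`, `|y| = (ξ - 1/2)² + 2ξ₁ - 1/4` stays away from zero and the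
kernel is at most `1/y² ≤ 1/(1 + (ξ - 1/2)²)`.
-/

open MeasureTheory Real

lemma integrable_inv_one_add_mul_sub_sq {b : ℝ} (hb : 0 < b) (r : ℝ) :
    Integrable fun x : ℝ => (1 + b * (x - r) ^ 2)⁻¹ := by
  have h := (integrable_inv_one_add_sq.comp_mul_left' (sqrt_pos.2 hb).ne').comp_sub_right r
  convert h using 2 with x
  rw [mul_pow, sq_sqrt hb.le]

lemma integral_inv_one_add_mul_sub_sq {b : ℝ} (hb : 0 < b) (r : ℝ) :
    ∫ x : ℝ, (1 + b * (x - r) ^ 2)⁻¹ = π / √b := by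
  have h := Measure.integral_comp_mul_left (fun y : ℝ => (1 + y ^ 2)⁻¹) √b
  simp only [mul_pow, sq_sqrt hb.le, integral_univ_inv_one_add_sq] at h
  rw [integral_sub_right_eq_self (fun y : ℝ => (1 + b * y ^ 2)⁻¹) r, h, smul_eq_mul,
    abs_of_pos (inv_pos.2 (sqrt_pos.2 hb)), inv_mul_eq_div]

lemma inv_one_add_mul_sq_mul_sq_le {b c u v : ℝ} (hb : 0 ≤ b) (hc : 0 ≤ c)
    (huv : 4 * c ≤ (u - v) ^ 2) :
    (1 + b * (u * v) ^ 2)⁻¹ ≤ (1 + b * c * u ^ 2)⁻¹ + (1 + b * c * v ^ 2)⁻¹ := by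
  wlog h : u ^ 2 ≤ v ^ 2 generalizing u v
  · rw [add_comm (1 + b * c * u ^ 2)⁻¹, mul_comm u v]
    exact this (u := v) (v := u) (by rwa [← neg_sub, neg_sq]) (by linarith)
  have hv : c ≤ v ^ 2 := by nlinarith [sq_nonneg (u + v)]
  have hfar : b * c * u ^ 2 ≤ b * (u * v) ^ 2 := by
    rw [mul_pow, mul_assoc, mul_comm (u ^ 2)]
    exact mul_le_mul_of_nonneg_left (mul_le_mul_of_nonneg_right hv (sq_nonneg u)) hb
  calc (1 + b * (u * v) ^ 2)⁻¹ ≤ (1 + b * c * u ^ 2)⁻¹ :=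
        inv_anti₀ (by positivity) (by linarith)
    _ ≤ _ := le_add_of_nonneg_right (by positivity)

section Kernel

variable {a : ℝ}

lemma sq_min_one_mul_abs_div_abs_le_inv_sq (ha : 0 ≤ a) (y : ℝ) :
    (min 1 (a * |y|) / |y|) ^ 2 ≤ (y ^ 2)⁻¹ := by
  rw [div_pow, ← sq_abs y, div_eq_mul_inv]
  have h0 : 0 ≤ min 1 (a * |y|) := le_min zero_le_one (by positivity)
  exact mul_le_of_le_one_left (by positivity)
    (pow_le_one₀ h0 (min_le_left _ _))

lemma sq_min_one_mul_abs_div_abs_le_two_mul_sq_mul_inv (ha : 0 ≤ a) (y : ℝ) :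
    (min 1 (a * |y|) / |y|) ^ 2 ≤ 2 * a ^ 2 * (1 + a ^ 2 * y ^ 2)⁻¹ := by
  rcases eq_or_ne y 0 with rfl | hy
  · rw [abs_zero, div_zero, zero_pow two_ne_zero]
    positivity
  have hy2 : 0 < y ^ 2 := by positivity
  rw [← div_eq_mul_inv, le_div_iff₀ (by positivity), div_pow, ← sq_abs y]
  rcases le_total (a * |y|) 1 with h | h
  · rw [min_eq_right h, mul_pow, mul_div_assoc, div_self (by positivity), mul_one]
    nlinarith [sq_nonneg a, mul_pow a |y| 2, pow_le_one₀ (by positivity) h (n := 2)]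
  · rw [min_eq_left h, one_pow, div_mul_eq_mul_div, div_le_iff₀ (by positivity)]
    nlinarith [mul_pow a |y| 2, one_le_pow₀ h (n := 2)]

end Kernel

noncomputable def resonantKernel (ξ₁ ξ : ℝ) : ℝ :=
  (min 1 (|ξ₁| ^ ((1:ℝ)/2) * |ξ - 2 * ξ₁ - ξ ^ 2|) / |ξ - 2 * ξ₁ - ξ ^ 2|) ^ 2

lemma resonantKernel_nonneg (ξ₁ ξ : ℝ) : 0 ≤ resonantKernel ξ₁ ξ := sq_nonneg _

lemma measurable_resonantKernel (ξ₁ : ℝ) : Measurable (resonantKernel ξ₁) := by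
  unfold resonantKernel; fun_prop

lemma resonantKernel_le_of_neg {ξ₁ : ℝ} (h : ξ₁ < 0) (ξ : ℝ) :
    resonantKernel ξ₁ ξ ≤ 2 * -ξ₁ *
      ((1 + ξ₁ ^ 2 * (ξ - (1 + √(1 - 8 * ξ₁)) / 2) ^ 2)⁻¹
        + (1 + ξ₁ ^ 2 * (ξ - (1 - √(1 - 8 * ξ₁)) / 2) ^ 2)⁻¹) := by
  have ha : (|ξ₁| ^ ((1:ℝ)/2)) ^ 2 = -ξ₁ := by
    rw [← sqrt_eq_rpow, sq_sqrt (abs_nonneg _), abs_of_neg h]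
  set D := √(1 - 8 * ξ₁)
  have hD : D ^ 2 = 1 - 8 * ξ₁ := sq_sqrt (by linarith)
  have hroots : ξ - 2 * ξ₁ - ξ ^ 2 = -((ξ - (1 + D) / 2) * (ξ - (1 - D) / 2)) := by
    linear_combination (-1/4 : ℝ) * hD
  have hsep : 4 * -ξ₁ ≤ ((ξ - (1 + D) / 2) - (ξ - (1 - D) / 2)) ^ 2 := by
    nlinarith
  calc resonantKernel ξ₁ ξ
      ≤ 2 * (|ξ₁| ^ ((1:ℝ)/2)) ^ 2 * (1 + (|ξ₁| ^ ((1:ℝ)/2)) ^ 2 * (ξ - 2 * ξ₁ - ξ ^ 2) ^ 2)⁻¹ :=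
        sq_min_one_mul_abs_div_abs_le_two_mul_sq_mul_inv (by positivity) _
    _ = 2 * -ξ₁ * (1 + -ξ₁ * ((ξ - (1 + D) / 2) * (ξ - (1 - D) / 2)) ^ 2)⁻¹ := by
        rw [ha, hroots, neg_sq]
    _ ≤ _ := by
        refine mul_le_mul_of_nonneg_left ?_ (by linarith)
        have hsplit := inv_one_add_mul_sq_mul_sq_le (b := -ξ₁) (by linarith) (by linarith) hsep
        rwa [neg_mul_neg, ← sq] at hsplit

lemma resonantKernel_le_of_one_le {ξ₁ : ℝ} (h : 1 ≤ ξ₁) (ξ : ℝ) :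
    resonantKernel ξ₁ ξ ≤ (1 + (ξ - 1 / 2) ^ 2)⁻¹ := by
  have hy : 1 + (ξ - 1 / 2) ^ 2 ≤ (ξ - 2 * ξ₁ - ξ ^ 2) ^ 2 := by
    nlinarith [sq_nonneg (ξ - 1 / 2), sq_nonneg ((ξ - 1 / 2) ^ 2 + 1)]
  exact (sq_min_one_mul_abs_div_abs_le_inv_sq (by positivity) _).trans
    (inv_anti₀ (by positivity) hy)

theorem integrable_resonantKernel_and_integral_le {ξ₁ : ℝ} (h : 1 ≤ |ξ₁|) :
    Integrable (resonantKernel ξ₁) ∧ ∫ ξ, resonantKernel ξ₁ ξ ≤ 4 * π := by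
  suffices ∃ g : ℝ → ℝ, Integrable g ∧ ∫ ξ, g ξ ≤ 4 * π ∧ ∀ ξ, resonantKernel ξ₁ ξ ≤ g ξ by
    obtain ⟨g, hg, hgπ, hle⟩ := this
    refine ⟨hg.mono' (measurable_resonantKernel ξ₁).aestronglyMeasurable
      (ae_of_all _ fun ξ => ?_), (integral_mono_of_nonneg
        (ae_of_all _ (resonantKernel_nonneg ξ₁)) hg (ae_of_all _ hle)).trans hgπ⟩
    rw [norm_of_nonneg (resonantKernel_nonneg ξ₁ ξ)]
    exact hle ξ
  rcases le_abs'.1 h with hneg | hpos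
  · have hb : 0 < ξ₁ ^ 2 := by nlinarith
    have hL := integrable_inv_one_add_mul_sub_sq hb ((1 + √(1 - 8 * ξ₁)) / 2)
    have hR := integrable_inv_one_add_mul_sub_sq hb ((1 - √(1 - 8 * ξ₁)) / 2)
    refine ⟨_, (hL.add hR).const_mul _, le_of_eq ?_, resonantKernel_le_of_neg (by linarith)⟩
    rw [integral_const_mul, integral_add' hL hR, integral_inv_one_add_mul_sub_sq hb,
      integral_inv_one_add_mul_sub_sq hb, sqrt_sq_eq_abs, abs_of_neg (by linarith)]
    field_simp [show ξ₁ ≠ 0 by linarith]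
    ring
  · refine ⟨_, by simpa using integrable_inv_one_add_mul_sub_sq one_pos (1 / 2), ?_,
      resonantKernel_le_of_one_le hpos⟩
    have hπ : ∫ ξ : ℝ, (1 + (ξ - 1 / 2) ^ 2)⁻¹ = π := by
      simpa using integral_inv_one_add_mul_sub_sq one_pos (1 / 2)
    linarith [pi_pos]

theorem resonant_kernel_bound_general (K : ℝ) :
    ∃ C M : ℝ, 0 < C ∧ 0 < M ∧ ∀ ξ₁ : ℝ, M ≤ |ξ₁| →
      (∫ ξ : ℝ,
        (if M ≤ ξ ^ 2 ∧ |ξ₁| ≤ K * ξ ^ 2 ∧ ξ ^ 2 ≤ K * |ξ₁| then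
          (min 1 (|ξ₁| ^ ((1:ℝ)/2) * |ξ - 2 * ξ₁ - ξ ^ 2|) / |ξ - 2 * ξ₁ - ξ ^ 2|) ^ 2
        else 0)) ≤ C := by
  refine ⟨4 * π, 1, by positivity, one_pos, fun ξ₁ hξ₁ => ?_⟩
  obtain ⟨hint, hbound⟩ := integrable_resonantKernel_and_integral_le hξ₁
  refine (integral_mono_of_nonneg (ae_of_all _ fun ξ => ?_) hint
    (ae_of_all _ fun ξ => ?_)).trans hbound
  · split_ifs
    exacts [resonantKernel_nonneg ξ₁ ξ, le_rfl]
  · split_ifs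
    exacts [le_rfl, resonantKernel_nonneg ξ₁ ξ]

/-- Resonant-region kernel bound: for comparability constant `K ≥ 1` there are `C, M > 0`
such that for every fixed `ξ₁` with `|ξ₁| ≥ M`,
`∫_{M ≤ ξ², ξ² ∼_K |ξ₁|} (min{1, |ξ₁|^{1/2}|ξ-2ξ₁-ξ²|}/|ξ-2ξ₁-ξ²|)² dξ ≤ C`,
with `C` independent of `ξ₁`. -/
theorem resonant_kernel_bound (K : ℝ) (hK : 1 ≤ K) :
    ∃ C M : ℝ, 0 < C ∧ 0 < M ∧ ∀ ξ₁ : ℝ, M ≤ |ξ₁| →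
      (∫ ξ : ℝ,
        (if M ≤ ξ ^ 2 ∧ |ξ₁| ≤ K * ξ ^ 2 ∧ ξ ^ 2 ≤ K * |ξ₁| then
          (min 1 (|ξ₁| ^ ((1:ℝ)/2) * |ξ - 2 * ξ₁ - ξ ^ 2|) / |ξ - 2 * ξ₁ - ξ ^ 2|) ^ 2
        else 0)) ≤ C :=
  resonant_kernel_bound_general K
end

section
/- For each fixed ξ₁ with |ξ₁| ≫ 1 and each t > 0, ‖χ_{1 ≪ |ξ|² ∼ |ξ₁|} · min{1, t|ξ₁|^{1/2}|ξ-2ξ₁-ξ²|} / |ξ-2ξ₁-ξ²|‖_{L²_ξ} ≲ t^{1/2}, with implied constant independent of ξ₁ and t. -/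
/-!
With `a = t |ξ₁|^{1/2}`, the squared kernel `(min 1 (a|y|) / |y|)²` is at most twice the Cauchy
profile `a² / (1 + (a y)²)`, whose integral is `π a`. On the region, `|ξ| ≥ c := (|ξ₁|/K)^{1/2} ≥ 1`;
on each of the half-lines `ξ ≥ c` and `ξ ≤ -c` the phase `y = ξ - 2ξ₁ - ξ²` is injective with
`|dy/dξ| = |1 - 2ξ| ≥ c`, so substituting `y` for `ξ` costs a factor `1/c`. Altogether the integral
is at most `4 π a / c = 4 π √K t`.
-/

open MeasureTheory Set Real

theorem integral_sq_mul_inv_one_add_sq_mul (a : ℝ) (ha : 0 < a) :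
    ∫ y : ℝ, a ^ 2 * (1 + (a * y) ^ 2)⁻¹ = π * a := by
  rw [integral_const_mul, Measure.integral_comp_mul_left (fun y => (1 + y ^ 2)⁻¹) a,
    integral_univ_inv_one_add_sq, abs_of_pos (inv_pos.mpr ha), smul_eq_mul]
  field_simp

theorem integrable_sq_mul_inv_one_add_sq_mul (a : ℝ) (ha : 0 < a) :
    Integrable fun y : ℝ => a ^ 2 * (1 + (a * y) ^ 2)⁻¹ :=
  (integrable_inv_one_add_sq.comp_mul_left' ha.ne').const_mul _

/-- The truncated kernel is `a` for `|y| ≤ 1/a` and `1/|y|` beyond. -/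
theorem sq_min_one_mul_abs_div_abs_le (a y : ℝ) (ha : 0 ≤ a) :
    (min 1 (a * |y|) / |y|) ^ 2 ≤ 2 * (a ^ 2 * (1 + (a * y) ^ 2)⁻¹) := by
  rcases eq_or_ne y 0 with rfl | hy
  · rw [abs_zero, div_zero, zero_pow two_ne_zero]
    positivity
  have hy2 : 0 < y ^ 2 := by positivity
  have hay : (a * |y|) ^ 2 = (a * y) ^ 2 := by rw [mul_pow, mul_pow, sq_abs]
  rw [div_pow, sq_abs, ← div_eq_mul_inv, mul_div_assoc', div_le_div_iff₀ hy2 (by positivity)]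
  rcases le_total (a * |y|) 1 with h | h
  · have h2 : (a * y) ^ 2 ≤ 1 := by rw [← hay]; exact pow_le_one₀ (by positivity) h
    rw [min_eq_right h, hay]
    nlinarith [mul_pow a y 2]
  · have h2 : 1 ≤ (a * y) ^ 2 := by rw [← hay]; exact one_le_pow₀ h
    rw [min_eq_left h]
    nlinarith [mul_pow a y 2]

section ChangeOfVariables

variable {s : Set ℝ} {f q q' : ℝ → ℝ} {m : ℝ}

theorem le_inv_mul_abs_deriv_mul (hm : 0 < m) (hmq : ∀ x ∈ s, m ≤ |q' x|) (hf0 : 0 ≤ f) :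
    ∀ x ∈ s, f (q x) ≤ m⁻¹ * (|q' x| * f (q x)) := fun x hx => by
  rw [le_inv_mul_iff₀ hm]
  exact mul_le_mul_of_nonneg_right (hmq x hx) (hf0 _)

variable (hs : MeasurableSet s) (hq : ∀ x ∈ s, HasDerivWithinAt q (q' x) s x) (hinj : InjOn q s)
  (hfi : Integrable f)
include hs hq hinj hfi

theorem integrableOn_abs_deriv_mul_comp : IntegrableOn (fun x => |q' x| * f (q x)) s :=
  (integrableOn_image_iff_integrableOn_abs_deriv_smul hs hq hinj f).1 hfi.integrableOn

variable (hm : 0 < m) (hmq : ∀ x ∈ s, m ≤ |q' x|) (hf0 : 0 ≤ f)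
include hm hmq hf0

theorem integrableOn_comp_of_le_abs_deriv (hf : Measurable f) : IntegrableOn (f ∘ q) s := by
  refine ((integrableOn_abs_deriv_mul_comp hs hq hinj hfi).const_mul m⁻¹).mono' ?_ ?_
  · exact (hf.comp_aemeasurable (ContinuousOn.aemeasurable
      (fun x hx => (hq x hx).continuousWithinAt) hs)).aestronglyMeasurable
  · filter_upwards [ae_restrict_mem hs] with x hx
    rw [Function.comp_apply, Real.norm_of_nonneg (hf0 _)]
    exact le_inv_mul_abs_deriv_mul hm hmq hf0 x hx

theorem setIntegral_comp_le_of_le_abs_deriv : ∫ x in s, f (q x) ≤ (∫ y, f y) / m := by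
  calc ∫ x in s, f (q x) ≤ ∫ x in s, m⁻¹ * (|q' x| * f (q x)) := by
        refine integral_mono_of_nonneg (ae_of_all _ fun x => hf0 (q x))
          ((integrableOn_abs_deriv_mul_comp hs hq hinj hfi).const_mul _) ?_
        filter_upwards [ae_restrict_mem hs] with x hx
        exact le_inv_mul_abs_deriv_mul hm hmq hf0 x hx
    _ = m⁻¹ * ∫ y in q '' s, f y := by
        rw [integral_const_mul, integral_image_eq_integral_abs_deriv_smul hs hq hinj]
        simp only [smul_eq_mul]
    _ ≤ m⁻¹ * ∫ y, f y :=
        mul_le_mul_of_nonneg_left (setIntegral_le_integral hfi (ae_of_all _ hf0))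
          (inv_nonneg.2 hm.le)
    _ = (∫ y, f y) / m := inv_mul_eq_div _ _

end ChangeOfVariables

theorem injOn_sub_sub_sq {s : Set ℝ} (b : ℝ) (hs : ∀ x ∈ s, ∀ y ∈ s, x + y ≠ 1) :
    InjOn (fun x => x - b - x ^ 2) s := fun x hx y hy hxy => by
  have h : (x - y) * (1 - (x + y)) = 0 := by simp only at hxy; linear_combination hxy
  rcases mul_eq_zero.1 h with h | h
  · linarith
  · exact absurd (by linarith) (hs x hx y hy)

theorem integrableOn_comp_sub_sub_sq_and_le {f : ℝ → ℝ} (hf : Measurable f) (hf0 : 0 ≤ f)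
    (hfi : Integrable f) (b : ℝ) {c : ℝ} (hc : 1 ≤ c) {s : Set ℝ} (hs : s = Ici c ∨ s = Iic (-c)) :
    IntegrableOn (fun x => f (x - b - x ^ 2)) s ∧
      ∫ x in s, f (x - b - x ^ 2) ≤ (∫ y, f y) / c := by
  have hmeas : MeasurableSet s := by rcases hs with rfl | rfl <;> measurability
  have hderiv : ∀ x ∈ s, HasDerivWithinAt (fun x => x - b - x ^ 2) (1 - 2 * x) s x := by
    intro x _
    exact (((hasDerivAt_id x).sub_const b).sub (hasDerivAt_pow 2 x)).hasDerivWithinAt.congr_deriv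
      (by simp)
  have hinj : InjOn (fun x => x - b - x ^ 2) s := by
    refine injOn_sub_sub_sq b fun x hx y hy => ?_
    rcases hs with rfl | rfl
    · exact ne_of_gt (by simp only [mem_Ici] at hx hy; linarith)
    · exact ne_of_lt (by simp only [mem_Iic] at hx hy; linarith)
  have hjac : ∀ x ∈ s, c ≤ |1 - 2 * x| := by
    intro x hx
    rcases hs with rfl | rfl
    · rw [abs_sub_comm]; exact le_abs.2 (Or.inl (by simp only [mem_Ici] at hx; linarith))
    · exact le_abs.2 (Or.inl (by simp only [mem_Iic] at hx; linarith))
  have hc0 : 0 < c := by linarith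
  exact ⟨integrableOn_comp_of_le_abs_deriv hmeas hderiv hinj hfi hc0 hjac hf0 hf,
    setIntegral_comp_le_of_le_abs_deriv hmeas hderiv hinj hfi hc0 hjac hf0⟩

theorem integral_le_of_le_indicator_kernel_sq {g : ℝ → ℝ} {a c : ℝ} (b : ℝ) (ha : 0 < a)
    (hc : 1 ≤ c) (hg0 : 0 ≤ g)
    (hg : g ≤ {x | c ≤ |x|}.indicator fun x =>
      (min 1 (a * |x - b - x ^ 2|) / |x - b - x ^ 2|) ^ 2) :
    ∫ x, g x ≤ 4 * π * a / c := by
  set F : ℝ → ℝ := fun y => 2 * (a ^ 2 * (1 + (a * y) ^ 2)⁻¹)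
  have hF : Measurable F := by fun_prop
  have hF0 : 0 ≤ F := fun y => by positivity
  have hFi : Integrable F := (integrable_sq_mul_inv_one_add_sq_mul a ha).const_mul 2
  have hFint : ∫ y, F y = 2 * (π * a) := by
    rw [integral_const_mul, integral_sq_mul_inv_one_add_sq_mul a ha]
  obtain ⟨hintR, hleR⟩ := integrableOn_comp_sub_sub_sq_and_le hF hF0 hFi b hc (.inl rfl)
  obtain ⟨hintL, hleL⟩ := integrableOn_comp_sub_sub_sq_and_le hF hF0 hFi b hc (.inr rfl)
  set G : ℝ → ℝ := fun x => F (x - b - x ^ 2)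
  have hdom : ∀ x, g x ≤ (Iic (-c)).indicator G x + (Ici c).indicator G x := by
    have hsplit : {x | c ≤ |x|} = Iic (-c) ∪ Ici c := by ext x; simp [le_abs']
    intro x
    refine (hg x).trans ?_
    rw [hsplit]
    exact (indicator_le_indicator (sq_min_one_mul_abs_div_abs_le a _ ha.le)).trans_eq
      (congrFun (indicator_union_of_disjoint (Iic_disjoint_Ici.2 (by linarith)) G) x)
  have hintR' := hintR.integrable_indicator measurableSet_Ici
  have hintL' := hintL.integrable_indicator measurableSet_Iic
  calc ∫ x, g x ≤ ∫ x, ((Iic (-c)).indicator G x + (Ici c).indicator G x) :=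
        integral_mono_of_nonneg (ae_of_all _ hg0) (hintL'.add hintR') (ae_of_all _ hdom)
    _ = (∫ x in Iic (-c), G x) + ∫ x in Ici c, G x := by
        rw [integral_add hintL' hintR', integral_indicator measurableSet_Iic,
          integral_indicator measurableSet_Ici]
    _ ≤ 2 * (π * a) / c + 2 * (π * a) / c := by rw [← hFint]; exact add_le_add hleL hleR
    _ = 4 * π * a / c := by ring

/-- Time-dependent resonant kernel bound: for comparability constant `K ≥ 1` there are
`C, M > 0` such that for every `t > 0` and every fixed `ξ₁` with `|ξ₁| ≥ M`,
`∫_{M ≤ ξ², ξ² ∼_K |ξ₁|} (min{1, t|ξ₁|^{1/2}|ξ-2ξ₁-ξ²|}/|ξ-2ξ₁-ξ²|)² dξ ≤ C t`,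
with constant independent of `ξ₁` and `t`. -/
theorem resonant_kernel_bound_time (K : ℝ) (hK : 1 ≤ K) :
    ∃ C M : ℝ, 0 < C ∧ 0 < M ∧ ∀ t : ℝ, 0 < t → ∀ ξ₁ : ℝ, M ≤ |ξ₁| →
      (∫ ξ : ℝ,
        (if M ≤ ξ ^ 2 ∧ |ξ₁| ≤ K * ξ ^ 2 ∧ ξ ^ 2 ≤ K * |ξ₁| then
          (min 1 (t * |ξ₁| ^ ((1:ℝ)/2) * |ξ - 2 * ξ₁ - ξ ^ 2|) / |ξ - 2 * ξ₁ - ξ ^ 2|) ^ 2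
        else 0)) ≤ C * t := by
  have hK0 : 0 < K := by linarith
  refine ⟨4 * π * √K, K, by positivity, hK0, fun t ht ξ₁ hξ₁ => ?_⟩
  have hξ₁0 : 0 < |ξ₁| := hK0.trans_le hξ₁
  have hc : 1 ≤ √(|ξ₁| / K) := one_le_sqrt.2 ((one_le_div hK0).2 hξ₁)
  refine (integral_le_of_le_indicator_kernel_sq (2 * ξ₁)
    (mul_pos ht (rpow_pos_of_pos hξ₁0 ((1:ℝ)/2))) hc (fun ξ => ?_) (fun ξ => ?_)).trans_eq ?_
  · dsimp only
    split_ifs <;> positivity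
  · dsimp only
    split_ifs with hreg
    · have : √(|ξ₁| / K) ≤ |ξ| :=
        (sqrt_le_sqrt ((div_le_iff₀' hK0).2 hreg.2.1)).trans_eq (sqrt_sq_eq_abs ξ)
      rw [indicator_of_mem (show ξ ∈ {x | √(|ξ₁| / K) ≤ |x|} from this)]
    · exact indicator_nonneg (fun _ _ => by positivity) ξ
  · have hsqrt : √|ξ₁| ≠ 0 := (sqrt_pos.2 hξ₁0).ne'
    rw [← sqrt_eq_rpow, sqrt_div (abs_nonneg ξ₁)]
    field_simp
end

section
/- Suppose Φ: ℝ² → ℂ satisfies: (i) |Φ(x,y)| ≤ h₁(x)h₂(y) with h₁, h₂ ∈ L¹(ℝ). Then the bilinear operator B(u)(t,x) = ∫∫ u(t,y) conj(u)(t,z) Φ(z-y, x-z) dy dz satisfies ‖B(u)‖_{L²_x L^∞_t} ≲ ‖h₁‖_{L¹}‖h₂‖_{L¹} ‖u‖²_{L⁴_x L^∞_t}. -/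
/-!
Writing `U x = sup_t |u(t,x)|`, the bound `|u(t,y)| |u(t,z)| ≤ U(y)² + U(z)²` together with
`|Φ(z-y, x-z)| ≤ h₁(z-y) h₂(x-z)` dominates `sup_t |B(u)(t,x)|` by the convolution of `U²` with
the kernel `|h₁| ⋆ |h₂| + ‖h₁‖₁ |h₂|`, whose mass is `2 ‖h₁‖₁ ‖h₂‖₁`. Young's inequality
`‖f ⋆ k‖₂ ≤ ‖k‖₁ ‖f‖₂` then gives the estimate, as `‖U²‖₂ = ‖U‖₄²`.

Since `u` is arbitrary, `U` need not be measurable and the integrals of `U²` are lower integrals.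
Against a.e. finite measurable weights they agree with the integrals of the greatest measurable
minorant of `U²`, and the convolution estimates are applied to that minorant.
-/

open MeasureTheory Set
open scoped ENNReal

theorem ENNReal.mul_le_sq_add_sq (a b : ℝ≥0∞) : a * b ≤ a ^ 2 + b ^ 2 := by
  rcases le_total a b with h | h
  · calc a * b ≤ b ^ 2 := by rw [sq]; gcongr
      _ ≤ a ^ 2 + b ^ 2 := le_add_self
  · calc a * b ≤ a ^ 2 := by rw [sq]; gcongr
      _ ≤ a ^ 2 + b ^ 2 := le_self_add

namespace MeasureTheory

section

variable {α : Type*} [MeasurableSpace α] {μ ν : Measure α}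

structure IsGreatestMeasurableMinorant (μ : Measure α) (f g : α → ℝ≥0∞) : Prop where
  measurable : Measurable g
  le : g ≤ f
  ae_le : ∀ m : α → ℝ≥0∞, Measurable m → m ≤ f → m ≤ᵐ[μ] g

/-- The minorant glues together, over rational levels `q`, the largest measurable subsets of
`{q < f}`: the complements of the measurable hulls of `{f ≤ q}`. -/
theorem exists_isGreatestMeasurableMinorant [SFinite μ] (f : α → ℝ≥0∞) :
    ∃ g, IsGreatestMeasurableMinorant μ f g := by
  set E : ℚ → Set α := fun q => (toMeasurable μ {x | f x ≤ ENNReal.ofReal q})ᶜ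
  have hE : ∀ q, MeasurableSet (E q) := fun q => (measurableSet_toMeasurable _ _).compl
  refine ⟨fun x => ⨆ q : ℚ, (E q).indicator (fun _ => ENNReal.ofReal q) x,
    .iSup fun q => measurable_const.indicator (hE q), fun x => iSup_le fun q => ?_,
    fun m hm hmf => ?_⟩
  · by_cases hx : x ∈ E q
    · rw [indicator_of_mem hx]
      exact (not_le.1 fun h => hx (subset_toMeasurable _ _ h)).le
    · simp [indicator_of_notMem hx]
  · have hnull : ∀ q : ℚ, ∀ᵐ x ∂μ, x ∉ E q → m x ≤ ENNReal.ofReal q := by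
      intro q
      rw [ae_iff]
      simp only [E, not_not, mem_compl_iff, not_le, Classical.not_imp]
      change μ (toMeasurable μ _ ∩ {x | ENNReal.ofReal q < m x}) = 0
      rw [Measure.measure_toMeasurable_inter_of_sFinite (measurableSet_lt measurable_const hm)]
      convert measure_empty (μ := μ)
      exact eq_empty_iff_forall_notMem.2 fun x hx => (hx.1.trans_lt hx.2).not_ge (hmf x)
    filter_upwards [ae_all_iff.2 hnull] with x hx
    by_contra! hlt
    obtain ⟨q, -, hgq, hqm⟩ := ENNReal.lt_iff_exists_rat_btwn.1 hlt
    by_cases hxq : x ∈ E q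
    · exact (le_iSup (fun q : ℚ => (E q).indicator (fun _ => ENNReal.ofReal q) x) q).not_gt
        (by rwa [indicator_of_mem hxq])
    · exact (hx q hxq).not_gt hqm

namespace IsGreatestMeasurableMinorant

variable {f g : α → ℝ≥0∞}

theorem lintegral_eq_of_absolutelyContinuous (hg : IsGreatestMeasurableMinorant μ f g)
    (hν : ν ≪ μ) : ∫⁻ x, f x ∂ν = ∫⁻ x, g x ∂ν := by
  refine le_antisymm ?_ (lintegral_mono hg.le)
  obtain ⟨m, hm, hmf, hint⟩ := exists_measurable_le_lintegral_eq ν f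
  rw [hint]
  exact lintegral_mono_ae (hν.ae_le (hg.ae_le m hm hmf))

theorem lintegral_mul_eq (hg : IsGreatestMeasurableMinorant μ f g) {ψ : α → ℝ≥0∞}
    (hψ : Measurable ψ) (hψ_lt_top : ∀ᵐ x ∂μ, ψ x < ∞) :
    ∫⁻ x, f x * ψ x ∂μ = ∫⁻ x, g x * ψ x ∂μ := by
  simpa only [lintegral_withDensity_eq_lintegral_mul_non_measurable μ hψ hψ_lt_top, Pi.mul_apply,
    mul_comm (ψ _)]
    using hg.lintegral_eq_of_absolutelyContinuous (withDensity_absolutelyContinuous μ ψ)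

end IsGreatestMeasurableMinorant

theorem AEMeasurable.exists_measurable_ge_ae_eq {f : α → ℝ≥0∞} (hf : AEMeasurable f μ) :
    ∃ F : α → ℝ≥0∞, Measurable F ∧ f ≤ F ∧ F =ᵐ[μ] f := by
  classical
  set N := toMeasurable μ {x | f x ≠ hf.mk f x}
  have hN : μ N = 0 := by rw [measure_toMeasurable]; exact hf.ae_eq_mk
  refine ⟨N.piecewise (fun _ => ∞) (hf.mk f),
    measurable_const.piecewise (measurableSet_toMeasurable _ _) hf.measurable_mk, fun x => ?_, ?_⟩
  · by_cases hx : x ∈ N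
    · simp [piecewise_eq_of_mem _ _ _ hx]
    · rw [piecewise_eq_of_notMem _ _ _ hx]
      exact (not_not.1 fun h => hx (subset_toMeasurable _ _ h)).le
  · filter_upwards [measure_eq_zero_iff_ae_notMem.1 hN, hf.ae_eq_mk] with x hx hfx
    rw [piecewise_eq_of_notMem _ _ _ hx, hfx]

theorem Integrable.exists_measurable_enorm_le_lintegral_eq {E : Type*} [NormedAddCommGroup E]
    {h : α → E} (hh : Integrable h μ) :
    ∃ H : α → ℝ≥0∞, Measurable H ∧ (∀ x, ‖h x‖ₑ ≤ H x) ∧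
      ∫⁻ x, H x ∂μ = ENNReal.ofReal (∫ x, ‖h x‖ ∂μ) := by
  obtain ⟨H, hH, hhH, hH_ae⟩ := hh.1.enorm.exists_measurable_ge_ae_eq
  exact ⟨H, hH, hhH, by rw [lintegral_congr_ae hH_ae, ofReal_integral_norm_eq_lintegral_enorm hh]⟩

theorem enorm_integral_integral_mul_conj_le {𝕜 : Type*} [RCLike 𝕜]
    {w : α → 𝕜} {U : α → ℝ≥0∞} (hw : ∀ y, ‖w y‖ₑ ≤ U y) {Ψ : α → α → 𝕜} {H : α → α → ℝ≥0∞}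
    (hΨ : ∀ y z, ‖Ψ y z‖ₑ ≤ H y z) :
    ‖∫ y, ∫ z, w y * starRingEnd 𝕜 (w z) * Ψ y z ∂μ ∂μ‖ₑ ≤
      ∫⁻ y, ∫⁻ z, (U y ^ 2 + U z ^ 2) * H y z ∂μ ∂μ := by
  refine (enorm_integral_le_lintegral_enorm _).trans (lintegral_mono fun y =>
    (enorm_integral_le_lintegral_enorm _).trans (lintegral_mono fun z => ?_))
  rw [enorm_mul, enorm_mul, RCLike.enorm_conj]
  exact mul_le_mul' ((mul_le_mul' (hw y) (hw z)).trans (ENNReal.mul_le_sq_add_sq _ _)) (hΨ y z)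

end

section Convolution

variable {G : Type*} [AddCommGroup G] [MeasurableSpace G] {μ : Measure G}

theorem lconvolution_apply_eq_lintegral_sub (f k : G → ℝ≥0∞) (x : G) :
    (f ⋆ₗ[μ] k) x = ∫⁻ y, f y * k (x - y) ∂μ := by
  simp only [lconvolution_def, neg_add_eq_sub]

theorem lintegral_comp_sub_mul_comp_sub [μ.IsAddRightInvariant] [MeasurableAdd G]
    (H₁ H₂ : G → ℝ≥0∞) (x y : G) :
    ∫⁻ z, H₁ (z - y) * H₂ (x - z) ∂μ = (H₁ ⋆ₗ[μ] H₂) (x - y) := by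
  rw [lconvolution_apply_eq_lintegral_sub, ← lintegral_add_right_eq_self _ y]
  refine lintegral_congr fun z => ?_
  rw [add_sub_cancel_right, sub_add_eq_sub_sub_swap]

variable [MeasurableAdd₂ G] [MeasurableNeg G] [SFinite μ] [μ.IsAddLeftInvariant]
  {f k : G → ℝ≥0∞}

theorem lintegral_lconvolution (hf : Measurable f) (hk : Measurable k) :
    ∫⁻ x, (f ⋆ₗ[μ] k) x ∂μ = (∫⁻ x, f x ∂μ) * ∫⁻ x, k x ∂μ := by
  simp only [lconvolution_def]
  rw [lintegral_lintegral_swap (by fun_prop)]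
  have hinner : ∀ y, ∫⁻ x, f y * k (-y + x) ∂μ = f y * ∫⁻ x, k x ∂μ := fun y => by
    rw [lintegral_const_mul _ (by fun_prop), lintegral_add_left_eq_self]
  simp_rw [hinner]
  exact lintegral_mul_const _ hf

theorem lintegral_lconvolution_sq_le [μ.IsNegInvariant] (hf : Measurable f) (hk : Measurable k) :
    ∫⁻ x, (f ⋆ₗ[μ] k) x ^ 2 ∂μ ≤ (∫⁻ x, k x ∂μ) ^ 2 * ∫⁻ x, f x ^ 2 ∂μ := by
  have hcauchy_schwarz : ∀ x, (f ⋆ₗ[μ] k) x ^ 2 ≤ ((f · ^ 2) ⋆ₗ[μ] k) x * ∫⁻ y, k y ∂μ := by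
    intro x
    have hH := ENNReal.lintegral_mul_norm_pow_le (μ := μ) (f := fun y => f y ^ 2 * k (x - y))
      (g := fun y => k (x - y)) (by fun_prop) (by fun_prop) (p := 1 / 2) (q := 1 / 2)
      (by norm_num) (by norm_num) (by norm_num)
    have hfk : ∀ y, (f y ^ 2 * k (x - y)) ^ (1 / 2 : ℝ) * k (x - y) ^ (1 / 2 : ℝ) =
        f y * k (x - y) := fun y => by
      rw [← ENNReal.mul_rpow_of_nonneg _ _ (by norm_num), mul_assoc, ← sq, ← mul_pow,
        ← ENNReal.rpow_two, ← ENNReal.rpow_mul]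
      norm_num
    simp only [hfk, lintegral_sub_left_eq_self] at hH
    rw [lconvolution_apply_eq_lintegral_sub, lconvolution_apply_eq_lintegral_sub]
    calc (∫⁻ y, f y * k (x - y) ∂μ) ^ 2
        ≤ ((∫⁻ y, f y ^ 2 * k (x - y) ∂μ) ^ (1 / 2 : ℝ) * (∫⁻ y, k y ∂μ) ^ (1 / 2 : ℝ)) ^ 2 := by
          gcongr
      _ = (∫⁻ y, f y ^ 2 * k (x - y) ∂μ) * ∫⁻ y, k y ∂μ := by
          rw [mul_pow, ← ENNReal.rpow_two, ← ENNReal.rpow_two, ← ENNReal.rpow_mul,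
            ← ENNReal.rpow_mul]
          norm_num
  calc ∫⁻ x, (f ⋆ₗ[μ] k) x ^ 2 ∂μ ≤ ∫⁻ x, ((f · ^ 2) ⋆ₗ[μ] k) x * ∫⁻ y, k y ∂μ ∂μ :=
        lintegral_mono hcauchy_schwarz
    _ = (∫⁻ x, k x ∂μ) ^ 2 * ∫⁻ x, f x ^ 2 ∂μ := by
        rw [lintegral_mul_const _ (measurable_lconvolution _ (by fun_prop) hk),
          lintegral_lconvolution (by fun_prop) hk]
        ring

theorem lintegral_lintegral_mul_comp_sub_mul_comp_sub [μ.IsNegInvariant] {g H₁ H₂ : G → ℝ≥0∞}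
    (hg : Measurable g) (hH₁ : Measurable H₁) (hH₂ : Measurable H₂) (x : G) :
    ∫⁻ y, ∫⁻ z, g z * (H₁ (z - y) * H₂ (x - z)) ∂μ ∂μ = (∫⁻ w, H₁ w ∂μ) * (g ⋆ₗ[μ] H₂) x := by
  rw [lintegral_lintegral_swap (by fun_prop), lconvolution_apply_eq_lintegral_sub,
    ← lintegral_const_mul _ (by fun_prop)]
  refine lintegral_congr fun z => ?_
  simp_rw [mul_left_comm (g z)]
  rw [lintegral_mul_const _ (by fun_prop), lintegral_sub_left_eq_self]

theorem IsGreatestMeasurableMinorant.lintegral_lintegral_add_mul_eq_lconvolution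
    [μ.IsNegInvariant] {V g H₁ H₂ : G → ℝ≥0∞} (hg : IsGreatestMeasurableMinorant μ V g)
    (hH₁ : Measurable H₁) (hH₂ : Measurable H₂) (hH₁_int : ∫⁻ w, H₁ w ∂μ ≠ ∞)
    (hH₂_int : ∫⁻ w, H₂ w ∂μ ≠ ∞) (x : G) :
    ∫⁻ y, ∫⁻ z, (V y + V z) * (H₁ (z - y) * H₂ (x - z)) ∂μ ∂μ =
      (g ⋆ₗ[μ] fun w => (H₁ ⋆ₗ[μ] H₂) w + (∫⁻ w, H₁ w ∂μ) * H₂ w) x := by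
  have hgm := hg.measurable
  set K := H₁ ⋆ₗ[μ] H₂
  have hK : Measurable K := measurable_lconvolution _ hH₁ hH₂
  have hK_int : ∫⁻ w, K w ∂μ ≠ ∞ := by
    rw [lintegral_lconvolution hH₁ hH₂]
    exact ENNReal.mul_ne_top hH₁_int hH₂_int
  have hV_inner (y : G) : ∫⁻ z, V z * (H₁ (z - y) * H₂ (x - z)) ∂μ =
      ∫⁻ z, g z * (H₁ (z - y) * H₂ (x - z)) ∂μ := by
    refine hg.lintegral_mul_eq (by fun_prop) ?_
    filter_upwards [(measurePreserving_sub_right μ y).quasiMeasurePreserving.ae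
      (ae_lt_top hH₁ hH₁_int), (quasiMeasurePreserving_sub_left μ x).ae (ae_lt_top hH₂ hH₂_int)]
      with z h₁ h₂ using ENNReal.mul_lt_top h₁ h₂
  have hsplit (y : G) : ∫⁻ z, (V y + V z) * (H₁ (z - y) * H₂ (x - z)) ∂μ =
      V y * K (x - y) + ∫⁻ z, g z * (H₁ (z - y) * H₂ (x - z)) ∂μ := by
    simp_rw [add_mul]
    rw [lintegral_add_left (by fun_prop), lintegral_const_mul _ (by fun_prop),
      lintegral_comp_sub_mul_comp_sub, hV_inner]
  simp_rw [hsplit]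
  rw [lintegral_add_right _ (by fun_prop), hg.lintegral_mul_eq (by fun_prop)
      ((quasiMeasurePreserving_sub_left μ x).ae (ae_lt_top hK hK_int)),
    lintegral_lintegral_mul_comp_sub_mul_comp_sub hgm hH₁ hH₂,
    lconvolution_apply_eq_lintegral_sub, lconvolution_apply_eq_lintegral_sub,
    ← lintegral_const_mul _ (by fun_prop), ← lintegral_add_left (by fun_prop)]
  simp only [mul_add, mul_left_comm]

theorem lintegral_sq_rpow_half_le_of_le_lconvolution [μ.IsNegInvariant] {F g U : G → ℝ≥0∞}
    (hg : Measurable g) (hk : Measurable k) (hF : ∀ x, F x ≤ (g ⋆ₗ[μ] k) x)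
    (hgU : ∀ x, g x ≤ U x ^ 2) :
    (∫⁻ x, F x ^ 2 ∂μ) ^ (1 / 2 : ℝ) ≤
      (∫⁻ x, k x ∂μ) * ((∫⁻ x, U x ^ 4 ∂μ) ^ (1 / 4 : ℝ)) ^ 2 := by
  calc (∫⁻ x, F x ^ 2 ∂μ) ^ (1 / 2 : ℝ)
      ≤ ((∫⁻ x, k x ∂μ) ^ 2 * ∫⁻ x, U x ^ 4 ∂μ) ^ (1 / 2 : ℝ) := by
        gcongr ?_ ^ _
        calc ∫⁻ x, F x ^ 2 ∂μ ≤ ∫⁻ x, (g ⋆ₗ[μ] k) x ^ 2 ∂μ := by gcongr with x; exact hF x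
          _ ≤ (∫⁻ x, k x ∂μ) ^ 2 * ∫⁻ x, g x ^ 2 ∂μ := lintegral_lconvolution_sq_le hg hk
          _ ≤ (∫⁻ x, k x ∂μ) ^ 2 * ∫⁻ x, U x ^ 4 ∂μ := mul_le_mul_right
            (lintegral_mono fun x => (pow_le_pow_left' (hgU x) 2).trans_eq (by ring)) _
    _ = (∫⁻ x, k x ∂μ) * ((∫⁻ x, U x ^ 4 ∂μ) ^ (1 / 4 : ℝ)) ^ 2 := by
        rw [ENNReal.mul_rpow_of_nonneg _ _ (by norm_num), ← ENNReal.rpow_two, ← ENNReal.rpow_two,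
          ← ENNReal.rpow_mul, ← ENNReal.rpow_mul]
        norm_num

end Convolution

end MeasureTheory

/-- Mixed-norm bound for the boundary bilinear operator: if `|Φ(x,y)| ≤ h₁(x)h₂(y)`
with `h₁, h₂ ∈ L¹`, then `B(u)(t,x) = ∫∫ u(t,y) conj(u(t,z)) Φ(z-y, x-z) dy dz` satisfies
`‖B(u)‖_{L²_x L^∞_t} ≲ ‖h₁‖_{L¹}‖h₂‖_{L¹}‖u‖²_{L⁴_x L^∞_t}`. -/
theorem boundary_bilinear_mixed_norm :
    ∃ C : ℝ, 0 < C ∧ ∀ (Φ : ℝ → ℝ → ℂ) (h₁ h₂ : ℝ → ℝ) (u : ℝ → ℝ → ℂ),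
      Integrable h₁ volume → Integrable h₂ volume →
      (∀ x y : ℝ, ‖Φ x y‖ ≤ h₁ x * h₂ y) →
      (∫⁻ x : ℝ, (⨆ t : ℝ,
          (‖∫ y : ℝ, ∫ z : ℝ,
              u t y * (starRingEnd ℂ) (u t z) * Φ (z - y) (x - z)‖₊ : ℝ≥0∞)) ^ 2) ^
          ((1:ℝ)/2) ≤
        ENNReal.ofReal (C * (∫ x : ℝ, |h₁ x|) * (∫ x : ℝ, |h₂ x|)) *
          ((∫⁻ x : ℝ, (⨆ t : ℝ, (‖u t x‖₊ : ℝ≥0∞)) ^ 4) ^ ((1:ℝ)/4)) ^ 2 := by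
  refine ⟨2, two_pos, fun Φ h₁ h₂ u hh₁ hh₂ hΦ => ?_⟩
  obtain ⟨H₁, hH₁, hh₁H₁, hN₁⟩ := hh₁.exists_measurable_enorm_le_lintegral_eq
  obtain ⟨H₂, hH₂, hh₂H₂, hN₂⟩ := hh₂.exists_measurable_enorm_le_lintegral_eq
  simp only [Real.norm_eq_abs] at hN₁ hN₂
  have hΦH (a b : ℝ) : ‖Φ a b‖ₑ ≤ H₁ a * H₂ b := by
    refine le_trans ?_ (mul_le_mul' (hh₁H₁ a) (hh₂H₂ b))
    rw [← enorm_mul, enorm_le_iff_norm_le]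
    exact (hΦ a b).trans (le_abs_self _)
  obtain ⟨g, hg⟩ := exists_isGreatestMeasurableMinorant (μ := volume)
    fun x => (⨆ t, ‖u t x‖ₑ) ^ 2
  set k : ℝ → ℝ≥0∞ := fun w => (H₁ ⋆ₗ H₂) w + (∫⁻ w, H₁ w) * H₂ w
  have hk_int : ∫⁻ w, k w = ENNReal.ofReal (2 * (∫ x, |h₁ x|) * ∫ x, |h₂ x|) := by
    rw [lintegral_add_left (measurable_lconvolution _ hH₁ hH₂), lintegral_const_mul _ hH₂,
      lintegral_lconvolution hH₁ hH₂, hN₁, hN₂, ENNReal.ofReal_mul (by positivity),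
      ENNReal.ofReal_mul zero_le_two, ENNReal.ofReal_ofNat]
    ring
  have hpointwise (x : ℝ) : (⨆ t, ‖∫ y, ∫ z, u t y * (starRingEnd ℂ) (u t z) *
      Φ (z - y) (x - z)‖ₑ) ≤ (g ⋆ₗ k) x := by
    rw [← hg.lintegral_lintegral_add_mul_eq_lconvolution hH₁ hH₂
      (hN₁ ▸ ENNReal.ofReal_ne_top) (hN₂ ▸ ENNReal.ofReal_ne_top) x]
    exact iSup_le fun t => enorm_integral_integral_mul_conj_le
      (fun y => le_iSup (fun t => ‖u t y‖ₑ) t) fun y z => hΦH (z - y) (x - z)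
  rw [← hk_int]
  exact lintegral_sq_rpow_half_le_of_le_lconvolution hg.measurable (by fun_prop) hpointwise hg.le
end
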